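/- arXiv:1105.1473 — 10 statements merged into one kernel-verified Lean document; each statement's English description precedes it below -/
import Mathlib

section
/- If a ∈ ℂ with |a| > 1, then there exists a dense subset Δ of the open unit disk {z ∈ ℂ : |z| < 1} such that for every b ∈ Δ, the set {a^k * b^l : k, l ∈ ℕ} is dense in ℂ. -/
open Filter Topology

open Real


/-- Near any nonzero point `b0` of the open unit disk, there is `b` in the disk with
`a ^ k * b ^ l = w` exactly, for some naturals `k, l`. -/
lemma keyA (a : ℂ) (ha : 1 < ‖a‖) (b0 : ℂ) (hb0 : b0 ≠ 0) (hb1 : ‖b0‖ < 1)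
    (w : ℂ) (hw : w ≠ 0) (δ : ℝ) (hδ : 0 < δ) :
    ∃ b : ℂ, ‖b - b0‖ < δ ∧ ‖b‖ < 1 ∧ ∃ k l : ℕ, a ^ k * b ^ l = w := by
  have hπ := Real.pi_pos
  set p := Real.log ‖a‖ with hp_def
  have hp : 0 < p := Real.log_pos ha
  have hρ0 : 0 < ‖b0‖ := norm_pos_iff.mpr hb0
  have hlρ : Real.log ‖b0‖ < 0 := Real.log_neg hρ0 hb1
  obtain ⟨l, hl⟩ := exists_nat_gt
    (max (Real.log ‖w‖ / Real.log ‖b0‖) (max (p + π) (2 * (p + π) / δ)))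
  have hl1 : Real.log ‖w‖ / Real.log ‖b0‖ < (l : ℝ) := lt_of_le_of_lt (le_max_left _ _) hl
  have hl2 : p + π < (l : ℝ) :=
    lt_of_le_of_lt ((le_max_left _ _).trans (le_max_right _ _)) hl
  have hl3 : 2 * (p + π) / δ < (l : ℝ) :=
    lt_of_le_of_lt ((le_max_right _ _).trans (le_max_right _ _)) hl
  have hlpos : (0 : ℝ) < l := by nlinarith
  have hlne : (l : ℝ) ≠ 0 := ne_of_gt hlpos
  have hnum : (l : ℝ) * Real.log ‖b0‖ ≤ Real.log ‖w‖ := by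
    have := (div_lt_iff_of_neg hlρ).mp hl1
    linarith
  set x := (Real.log ‖w‖ - l * Real.log ‖b0‖) / p with hx_def
  have hx0 : 0 ≤ x := div_nonneg (by linarith) hp.le
  set k := ⌈x⌉₊ with hk_def
  have hk1 : x ≤ (k : ℝ) := Nat.le_ceil x
  have hk2 : (k : ℝ) < x + 1 := Nat.ceil_lt_add_one hx0
  have ha0 : a ≠ 0 := by
    intro h; rw [h] at ha; simp at ha; linarith
  have hak : a ^ k ≠ 0 := pow_ne_zero _ ha0
  set c := w / a ^ k with hc_def
  have hc : c ≠ 0 := div_ne_zero hw hak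
  have hR : 0 < ‖c‖ := norm_pos_iff.mpr hc
  have hlogR : Real.log (‖c‖) = Real.log ‖w‖ - k * p := by
    have h1 : ‖c‖ = ‖w‖ / ‖a‖ ^ k := by
      rw [hc_def, norm_div, norm_pow]
    rw [h1, Real.log_div (norm_ne_zero_iff.mpr hw) (pow_ne_zero _ (by positivity)),
      Real.log_pow, hp_def]
  have hkp1 : Real.log ‖w‖ - l * Real.log ‖b0‖ ≤ k * p := by
    rw [hx_def] at hk1; exact (div_le_iff₀ hp).mp hk1
  have hxp : x * p = Real.log ‖w‖ - l * Real.log ‖b0‖ := by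
    rw [hx_def]; field_simp
  have hkp2 : (k : ℝ) * p < Real.log ‖w‖ - l * Real.log ‖b0‖ + p := by nlinarith
  have hup : Real.log (‖c‖) ≤ l * Real.log ‖b0‖ := by
    rw [hlogR]; linarith
  have hlow : (l : ℝ) * Real.log ‖b0‖ - p < Real.log (‖c‖) := by
    rw [hlogR]; linarith
  set Θ := c.arg with hΘ_def
  set φ0 := b0.arg with hφ0_def
  set j : ℤ := round (((l : ℝ) * φ0 - Θ) / (2 * π)) with hj_def
  set ψ := (Θ + 2 * π * j) / l with hψ_def
  have hψ : |ψ - φ0| ≤ π / l := by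
    have h1 : |(((l : ℝ) * φ0 - Θ) / (2 * π)) - j| ≤ 1 / 2 := abs_sub_round _
    have heq : ψ - φ0 = -(2 * π) * ((((l : ℝ) * φ0 - Θ) / (2 * π)) - j) / l := by
      field_simp [hψ_def]; rw [hψ_def, sub_mul, div_mul_cancel₀ _ hlne]; ring
    rw [heq, abs_div, abs_mul, abs_neg, abs_of_pos (by positivity : (0:ℝ) < 2 * π),
      abs_of_pos hlpos]
    exact (div_le_div_iff_of_pos_right hlpos).mpr (by nlinarith)
  set z1 : ℂ := (↑(Real.log (‖c‖) / l) + ↑ψ * Complex.I) with hz1_def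
  set b := Complex.exp z1 with hb_def
  have hz1re : z1.re = Real.log (‖c‖) / l := by simp [hz1_def]
  have hbnorm : ‖b‖ = Real.exp (Real.log (‖c‖) / l) := by
    rw [hb_def, Complex.norm_exp, hz1re]
  have hdivle : Real.log (‖c‖) / l ≤ Real.log ‖b0‖ := by
    rw [div_le_iff₀ hlpos]; linarith [hup]
  have hb_lt : ‖b‖ < 1 := by
    rw [hbnorm]
    calc Real.exp (Real.log (‖c‖) / l) ≤ Real.exp (Real.log ‖b0‖) :=
          Real.exp_le_exp.mpr hdivle
      _ = ‖b0‖ := Real.exp_log hρ0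
      _ < 1 := hb1
  have hbl : b ^ l = c := by
    rw [hb_def, ← Complex.exp_nat_mul]
    have hlneC : (l : ℂ) ≠ 0 := by exact_mod_cast hlne
    have gen : ∀ L T : ℝ, (l : ℂ) * ((↑(L / l) : ℂ) + ↑((T + 2 * π * j) / l) * Complex.I)
        = ↑L + ↑T * Complex.I + (j : ℂ) * (2 * ↑π * Complex.I) := by
      intro L T
      push_cast
      field_simp
      ring
    have heq : (l : ℂ) * z1 = ↑(Real.log (‖c‖)) + ↑Θ * Complex.I
        + (j : ℂ) * (2 * ↑π * Complex.I) := by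
      rw [hz1_def, hψ_def]; exact gen _ _
    rw [heq, Complex.exp_add, Complex.exp_int_mul_two_pi_mul_I, mul_one,
      Complex.exp_add, ← Complex.ofReal_exp, Real.exp_log hR, hΘ_def,
      Complex.norm_mul_exp_arg_mul_I]
  have key : a ^ k * b ^ l = w := by
    rw [hbl, hc_def]; field_simp
  have hb0eq : b0 = Complex.exp (↑(Real.log ‖b0‖) + ↑φ0 * Complex.I) := by
    rw [Complex.exp_add, ← Complex.ofReal_exp, Real.exp_log hρ0, hφ0_def]
    exact (Complex.norm_mul_exp_arg_mul_I b0).symm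
  set z2 : ℂ := (↑(Real.log ‖b0‖) + ↑φ0 * Complex.I) with hz2_def
  have hz12 : z1 - z2 = ↑(Real.log (‖c‖) / l - Real.log ‖b0‖)
      + ↑(ψ - φ0) * Complex.I := by
    rw [hz1_def, hz2_def]; push_cast; ring
  have hdiv_lb : Real.log ‖b0‖ - p / l ≤ Real.log (‖c‖) / l := by
    rw [sub_le_iff_le_add, ← add_div, le_div_iff₀ hlpos]
    linarith [hlow, mul_comm (Real.log ‖b0‖) ((l:ℕ):ℝ)]
  have habs1 : |Real.log (‖c‖) / l - Real.log ‖b0‖| ≤ p / l := by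
    rw [abs_le]; constructor <;> [linarith; linarith [hdivle, div_nonneg hp.le hlpos.le]]
  have hnorm_d : ‖z1 - z2‖ ≤ (p + π) / l := by
    rw [hz12]
    calc ‖(↑(Real.log (‖c‖) / l - Real.log ‖b0‖) : ℂ) + ↑(ψ - φ0) * Complex.I‖
        ≤ ‖(↑(Real.log (‖c‖) / l - Real.log ‖b0‖) : ℂ)‖ + ‖(↑(ψ - φ0) : ℂ) * Complex.I‖ :=
          norm_add_le _ _
      _ = |Real.log (‖c‖) / l - Real.log ‖b0‖| + |ψ - φ0| := by
          rw [norm_mul, Complex.norm_I, mul_one, Complex.norm_real, Complex.norm_real,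
            Real.norm_eq_abs, Real.norm_eq_abs]
      _ ≤ p / l + π / l := add_le_add habs1 hψ
      _ = (p + π) / l := by rw [← add_div]
  have hle1 : ‖z1 - z2‖ ≤ 1 := hnorm_d.trans (by rw [div_le_one hlpos]; linarith)
  have hfactor : Complex.exp z1 - Complex.exp z2
      = Complex.exp z2 * (Complex.exp (z1 - z2) - 1) := by
    rw [mul_sub, ← Complex.exp_add, add_sub_cancel, mul_one]
  have hz2norm : ‖Complex.exp z2‖ ≤ 1 := by
    rw [Complex.norm_exp]
    have : z2.re = Real.log ‖b0‖ := by simp [hz2_def]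
    rw [this]
    calc Real.exp (Real.log ‖b0‖) = ‖b0‖ := Real.exp_log hρ0
      _ ≤ 1 := hb1.le
  have hexp_est : ‖Complex.exp (z1 - z2) - 1‖ ≤ 2 * ‖z1 - z2‖ := by
    exact Complex.norm_exp_sub_one_le hle1
  have hdist : ‖b - b0‖ < δ := by
    rw [hb_def, hb0eq, hfactor, norm_mul]
    have h1 : ‖Complex.exp z2‖ * ‖Complex.exp (z1 - z2) - 1‖ ≤ 2 * ((p + π) / l) := by
      calc ‖Complex.exp z2‖ * ‖Complex.exp (z1 - z2) - 1‖
          ≤ 1 * (2 * ‖z1 - z2‖) :=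
            mul_le_mul hz2norm hexp_est (norm_nonneg _) zero_le_one
        _ = 2 * ‖z1 - z2‖ := one_mul _
        _ ≤ 2 * ((p + π) / l) := by linarith [hnorm_d]
    have h2 : 2 * ((p + π) / l) < δ := by
      have h3 : 2 * (p + π) < (l : ℝ) * δ := (div_lt_iff₀ hδ).mp hl3
      rw [← mul_div_assoc, div_lt_iff₀ hlpos]
      linarith [mul_comm δ ((l : ℕ) : ℝ)]
    linarith
  exact ⟨b, hdist, hb_lt, k, l, key⟩

lemma keyB (a : ℂ) (ha : 1 < ‖a‖) (w : ℂ) (ε : ℝ) (hε : 0 < ε) :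
    Dense {b : ℂ | 1 < ‖b‖ ∨ (‖b‖ < 1 ∧ ∃ k l : ℕ, ‖a ^ k * b ^ l - w‖ < ε)} := by
  rw [Metric.dense_iff]
  intro z r hr
  by_cases hz : 1 ≤ ‖z‖
  · -- go slightly outward
    have hz0 : 0 < ‖z‖ := lt_of_lt_of_le one_pos hz
    refine ⟨((1 + r / (2 * ‖z‖) : ℝ) : ℂ) * z, ?_, Or.inl ?_⟩
    · rw [Metric.mem_ball, dist_eq_norm]
      have heq : ((1 + r / (2 * ‖z‖) : ℝ) : ℂ) * z - z = ((r / (2 * ‖z‖) : ℝ) : ℂ) * z := by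
        push_cast; ring
      rw [heq, norm_mul, Complex.norm_real, Real.norm_eq_abs,
        abs_of_pos (by positivity : (0:ℝ) < r / (2 * ‖z‖))]
      rw [div_mul_eq_mul_div, mul_comm (2:ℝ) ‖z‖, ← div_div, mul_div_assoc,
        div_self (ne_of_gt hz0), mul_one]
      linarith
    · rw [norm_mul, Complex.norm_real, Real.norm_eq_abs,
        abs_of_pos (by positivity : (0:ℝ) < 1 + r / (2 * ‖z‖))]
      nlinarith [div_pos hr (by positivity : (0:ℝ) < 2 * ‖z‖)]
  · push_neg at hz
    -- pick a nonzero base point b0 near z inside the disk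
    obtain ⟨b0, hb0ne, hb0lt, hb0close⟩ :
        ∃ b0 : ℂ, b0 ≠ 0 ∧ ‖b0‖ < 1 ∧ ‖b0 - z‖ < r / 2 := by
      by_cases hz0 : z = 0
      · refine ⟨((min r 1 / 4 : ℝ) : ℂ), ?_, ?_, ?_⟩
        · simp only [ne_eq, Complex.ofReal_eq_zero]
          positivity
        · rw [Complex.norm_real, Real.norm_eq_abs,
            abs_of_pos (by positivity : (0:ℝ) < min r 1 / 4)]
          have : min r 1 ≤ 1 := min_le_right _ _
          linarith
        · rw [hz0, sub_zero, Complex.norm_real, Real.norm_eq_abs,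
            abs_of_pos (by positivity : (0:ℝ) < min r 1 / 4)]
          have : min r 1 ≤ r := min_le_left _ _
          linarith
      · exact ⟨z, hz0, hz, by simpa using by positivity⟩
    set w' : ℂ := if w = 0 then ((ε / 2 : ℝ) : ℂ) else w with hw'_def
    have hw' : w' ≠ 0 := by
      rw [hw'_def]
      split_ifs with h
      · simp only [ne_eq, Complex.ofReal_eq_zero]
        positivity
      · exact h
    have hw'close : ‖w' - w‖ < ε := by
      rw [hw'_def]
      split_ifs with h
      · rw [h, sub_zero, Complex.norm_real, Real.norm_eq_abs,
          abs_of_pos (by positivity : (0:ℝ) < ε / 2)]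
        linarith
      · simpa using hε
    obtain ⟨b, hbclose, hblt, k, l, hbkl⟩ :=
      keyA a ha b0 hb0ne hb0lt w' hw' (r / 2) (by positivity)
    refine ⟨b, ?_, Or.inr ⟨hblt, k, l, ?_⟩⟩
    · rw [Metric.mem_ball, dist_eq_norm]
      calc ‖b - z‖ ≤ ‖b - b0‖ + ‖b0 - z‖ := norm_sub_le_norm_sub_add_norm_sub _ _ _
        _ < r / 2 + r / 2 := add_lt_add hbclose hb0close
        _ = r := by ring
    · rw [hbkl]; exact hw'close

/-- If `a ∈ ℂ` with `|a| > 1`, then there exists a dense subset `Δ` of the open unit disk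
such that for every `b ∈ Δ`, the set `{a^k * b^l : k, l ∈ ℕ}` is dense in `ℂ`. -/
theorem stmt0 (a : ℂ) (ha : 1 < ‖a‖) :
    ∃ Δ : Set ℂ, Δ ⊆ {z : ℂ | ‖z‖ < 1} ∧ {z : ℂ | ‖z‖ < 1} ⊆ closure Δ ∧
      ∀ b ∈ Δ, Dense {w : ℂ | ∃ k l : ℕ, w = a ^ k * b ^ l} := by
  have hu : DenseRange (TopologicalSpace.denseSeq ℂ) := TopologicalSpace.denseRange_denseSeq ℂ
  set u := TopologicalSpace.denseSeq ℂ with hu_def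
  set F : ℕ × ℕ → Set ℂ := fun nm =>
    {b : ℂ | 1 < ‖b‖ ∨ (‖b‖ < 1 ∧ ∃ k l : ℕ, ‖a ^ k * b ^ l - u nm.2‖ < 1 / (nm.1 + 1))}
    with hF_def
  have hOpen : ∀ nm, IsOpen (F nm) := by
    intro nm
    have heq : F nm = {b : ℂ | 1 < ‖b‖} ∪ ({b : ℂ | ‖b‖ < 1} ∩
        ⋃ k : ℕ, ⋃ l : ℕ, {b : ℂ | ‖a ^ k * b ^ l - u nm.2‖ < 1 / (nm.1 + 1)}) := by
      ext b
      simp only [hF_def, Set.mem_setOf_eq, Set.mem_union, Set.mem_inter_iff, Set.mem_iUnion]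
    rw [heq]
    refine IsOpen.union (isOpen_lt continuous_const continuous_norm)
      (IsOpen.inter (isOpen_lt continuous_norm continuous_const)
        (isOpen_iUnion fun k => isOpen_iUnion fun l =>
          isOpen_lt (Continuous.norm ?_) continuous_const))
    exact Continuous.sub (continuous_const.mul (continuous_pow l)) continuous_const
  have hDense : ∀ nm : ℕ × ℕ, Dense (F nm) := fun nm =>
    keyB a ha (u nm.2) (1 / (nm.1 + 1)) (by positivity)
  have hD : Dense (⋂ nm, F nm) := dense_iInter_of_isOpen hOpen hDense
  refine ⟨{z : ℂ | ‖z‖ < 1} ∩ ⋂ nm, F nm, Set.inter_subset_left, ?_, ?_⟩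
  · intro z hz
    rw [_root_.mem_closure_iff]
    intro o ho hzo
    obtain ⟨y, ⟨hyo, hy1⟩, hyF⟩ := hD.inter_open_nonempty (o ∩ {z : ℂ | ‖z‖ < 1})
      (ho.inter (isOpen_lt continuous_norm continuous_const)) ⟨z, hzo, hz⟩
    exact ⟨y, hyo, hy1, hyF⟩
  · rintro b ⟨hb1, hbF⟩
    rw [Metric.dense_iff]
    intro x r hr
    obtain ⟨m, hm⟩ := Metric.denseRange_iff.mp hu x (r / 2) (by positivity)
    obtain ⟨n, hn⟩ := exists_nat_one_div_lt (show (0:ℝ) < r / 2 by positivity)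
    have hbnm := Set.mem_iInter.mp hbF (n, m)
    rcases hbnm with h | ⟨_, k, l, hkl⟩
    · exact absurd hb1 (not_lt.mpr h.le)
    · refine ⟨a ^ k * b ^ l, ?_, ⟨k, l, rfl⟩⟩
      rw [Metric.mem_ball]
      calc dist (a ^ k * b ^ l) x ≤ dist (a ^ k * b ^ l) (u m) + dist (u m) x :=
            dist_triangle _ _ _
        _ < 1 / (n + 1) + r / 2 := by
            refine add_lt_add_of_lt_of_le ?_ (le_of_lt ?_)
            · rw [dist_eq_norm]; exact hkl
            · rw [dist_comm]; exact hm
        _ < r / 2 + r / 2 := by linarith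
        _ = r := by ring
end

section
/- Let a ∈ ℂ with |a| > 1 and b ∈ ℂ with 1/|a| < |b| < 1 such that {a^k * b^l : k, l ∈ ℕ} is dense in ℂ. Then for every y ∈ ℂ there exist sequences (i_m), (j_m) of natural numbers both tending to +∞ such that a^{i_m} * b^{j_m} → y. -/
open Filter Topology

/-- If `1/|a| < |b| < 1 < |a|` and `{a^k b^l}` is dense in `ℂ`, then every `y ∈ ℂ` is the
limit of `a^{i_m} b^{j_m}` with `i_m, j_m → ∞`. -/
theorem stmt1 (a b : ℂ) (ha : 1 < ‖a‖) (hb1 : 1 / ‖a‖ < ‖b‖) (hb2 : ‖b‖ < 1)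
    (hdense : Dense {w : ℂ | ∃ k l : ℕ, w = a ^ k * b ^ l}) (y : ℂ) :
    ∃ i j : ℕ → ℕ, Tendsto i atTop atTop ∧ Tendsto j atTop atTop ∧
      Tendsto (fun m => a ^ (i m) * b ^ (j m)) atTop (𝓝 y) := by
  have ha0 : a ≠ 0 := by
    intro h; rw [h] at ha; simp at ha; linarith
  have hb0 : b ≠ 0 := by
    intro h; rw [h] at hb1; simp at hb1
    exact absurd hb1 (not_lt.2 (by positivity))
  have key : ∀ m : ℕ, ∃ k l : ℕ, dist (a ^ k * b ^ l) y < 1 / (m + 1) ∧ m ≤ k ∧ m ≤ l := by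
    intro m
    have hc : (a ^ m * b ^ m : ℂ) ≠ 0 := by
      exact mul_ne_zero (pow_ne_zero _ ha0) (pow_ne_zero _ hb0)
    set e := Homeomorph.mulLeft₀ (a ^ m * b ^ m) hc with he
    have hd : Dense (e '' {w : ℂ | ∃ k l : ℕ, w = a ^ k * b ^ l}) := by
      rw [dense_iff_closure_eq, ← e.image_closure, hdense.closure_eq, Set.image_univ,
        e.surjective.range_eq]
    obtain ⟨w, hwd, hw⟩ := Metric.dense_iff.1 hd y (1 / (m + 1)) (by positivity)
    obtain ⟨v, ⟨k, l, rfl⟩, rfl⟩ := hw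
    refine ⟨m + k, m + l, ?_, Nat.le_add_right _ _, Nat.le_add_right _ _⟩
    have : e (a ^ k * b ^ l) = a ^ (m + k) * b ^ (m + l) := by
      rw [he]; show a ^ m * b ^ m * (a ^ k * b ^ l) = _; ring
    rw [← this]
    simpa [Metric.mem_ball, dist_comm] using hwd
  choose i j hdist hi hj using key
  refine ⟨i, j, tendsto_atTop_mono hi tendsto_id, tendsto_atTop_mono hj tendsto_id, ?_⟩
  rw [tendsto_iff_dist_tendsto_zero]
  refine squeeze_zero (fun m => dist_nonneg) (fun m => (hdist m).le) ?_
  exact tendsto_one_div_add_atTop_nhds_zero_nat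
end

section
/- Let G be an abelian sub-semigroup of the lower triangular matrices T_n(ℂ) with all diagonal entries equal. For x ∈ ℂⁿ define H_x = ℂx + F_G, where F_G is the linear span of the vectors (B − μ_B I_n) e_i for B ∈ G, 1 ≤ i ≤ n−1, μ_B the common diagonal entry of B, and (e_1,…,e_n) the canonical basis. Then H_x is G-invariant, i.e. B(H_x) ⊆ H_x for every B ∈ G. -/
open Filter Topology Matrix

/-- `n × n` lower triangular complex matrices whose diagonal entries are all equal. -/
def IsTn {n : ℕ} (A : Matrix (Fin n) (Fin n) ℂ) : Prop :=
  (∀ i j : Fin n, i < j → A i j = 0) ∧ ∀ i j : Fin n, A i i = A j j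

/-- `F_G`: the span of the vectors `(B - μ_B I) e_i`, `B ∈ G`, `1 ≤ i ≤ n-1`. -/
noncomputable def FG {n : ℕ} (G : Set (Matrix (Fin n) (Fin n) ℂ)) : Submodule ℂ (Fin n → ℂ) :=
  Submodule.span ℂ {v | ∃ B ∈ G, ∃ i : Fin n, (i : ℕ) < n - 1 ∧
    v = (B - B i i • (1 : Matrix (Fin n) (Fin n) ℂ)).mulVec (Pi.single i 1)}

/-- The sub-semigroup generated by matrices `A 1, …, A p`. -/
def genSG {n p : ℕ} (A : Fin p → Matrix (Fin n) (Fin n) ℂ) :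
    Set (Matrix (Fin n) (Fin n) ℂ) :=
  {B | ∃ k : Fin p → ℕ, 0 < ∑ j, k j ∧ B = (List.ofFn fun j => A j ^ k j).prod}

/-- The extended limit set `J_G(x)` for the semigroup generated by `A 1, …, A p`. -/
def JSet {n p : ℕ} (A : Fin p → Matrix (Fin n) (Fin n) ℂ) (x : Fin n → ℂ) :
    Set (Fin n → ℂ) :=
  {y | ∃ (xs : ℕ → Fin n → ℂ) (k : ℕ → Fin p → ℕ),
    Tendsto (fun m => ∑ j, k m j) atTop atTop ∧
    Tendsto xs atTop (𝓝 x) ∧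
    Tendsto (fun m => ((List.ofFn fun j => A j ^ k m j).prod).mulVec (xs m)) atTop (𝓝 y)}


lemma col_last {n : ℕ} {B : Matrix (Fin n) (Fin n) ℂ} (hB : IsTn B) (i j : Fin n)
    (hi : ¬ (i : ℕ) < n - 1) :
    (B - B j j • (1 : Matrix (Fin n) (Fin n) ℂ)).mulVec (Pi.single i 1) = 0 := by
  ext k
  simp only [mulVec_single_one, col_apply, mul_one, Matrix.sub_apply, Matrix.smul_apply, one_apply, smul_eq_mul,
    Pi.zero_apply]
  have hk : (k : ℕ) < n := k.isLt
  have hin : (i : ℕ) < n := i.isLt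
  rcases lt_trichotomy (k : ℕ) (i : ℕ) with h | h | h
  · rw [hB.1 k i h, if_neg (by intro e; rw [e] at h; omega)]; ring
  · have hki : k = i := Fin.ext h
    subst hki; rw [if_pos rfl, hB.2 j k]; ring
  · omega

lemma key {n : ℕ} {G : Set (Matrix (Fin n) (Fin n) ℂ)}
    {B : Matrix (Fin n) (Fin n) ℂ} (hBG : B ∈ G) (hB : IsTn B) (j : Fin n)
    (v : Fin n → ℂ) :
    (B - B j j • (1 : Matrix (Fin n) (Fin n) ℂ)).mulVec v ∈ FG G := by
  have hv : v = ∑ i, (v i) • (Pi.single i 1 : Fin n → ℂ) := by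
    ext k; simp [Pi.single_apply, Finset.sum_ite_eq']
  rw [hv, ← mulVecLin_apply, map_sum]
  refine Submodule.sum_mem _ fun i _ => ?_
  rw [_root_.map_smul]
  refine Submodule.smul_mem _ _ ?_
  rw [mulVecLin_apply]
  by_cases hi : (i : ℕ) < n - 1
  · refine Submodule.subset_span ⟨B, hBG, i, hi, ?_⟩
    rw [hB.2 j i]
  · rw [col_last hB i j hi]; exact Submodule.zero_mem _

lemma FG_inv {n : ℕ} {G : Set (Matrix (Fin n) (Fin n) ℂ)}
    (hT : ∀ B ∈ G, IsTn B)
    (hcomm : ∀ A ∈ G, ∀ B ∈ G, A * B = B * A)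
    {B : Matrix (Fin n) (Fin n) ℂ} (hBG : B ∈ G) :
    ∀ z ∈ FG G, B.mulVec z ∈ FG G := by
  intro z hz
  induction hz using Submodule.span_induction with
  | mem v hv =>
    obtain ⟨C, hCG, i, hi, rfl⟩ := hv
    rw [mulVec_mulVec]
    have hswap : B * (C - C i i • (1 : Matrix (Fin n) (Fin n) ℂ))
        = (C - C i i • (1 : Matrix (Fin n) (Fin n) ℂ)) * B := by
      rw [Matrix.mul_sub, Matrix.sub_mul, hcomm B hBG C hCG,
        Matrix.mul_smul, Matrix.smul_mul, mul_one, one_mul]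
    rw [hswap, ← mulVec_mulVec]
    exact key hCG (hT C hCG) i _
  | zero => rw [mulVec_zero]; exact Submodule.zero_mem _
  | add u v _ _ hu hv => rw [mulVec_add]; exact Submodule.add_mem _ hu hv
  | smul a u _ hu => rw [mulVec_smul]; exact Submodule.smul_mem _ _ hu

/-- `H_x = ℂ x + F_G` is `G`-invariant for an abelian sub-semigroup `G` of `T_n(ℂ)`. -/
theorem stmt2 (n : ℕ) (G : Set (Matrix (Fin n) (Fin n) ℂ))
    (hT : ∀ B ∈ G, IsTn B)
    (hmul : ∀ A ∈ G, ∀ B ∈ G, A * B ∈ G)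
    (hcomm : ∀ A ∈ G, ∀ B ∈ G, A * B = B * A)
    (x : Fin n → ℂ) :
    ∀ B ∈ G, ∀ w ∈ (Submodule.span ℂ {x} ⊔ FG G : Submodule ℂ (Fin n → ℂ)),
      B.mulVec w ∈ (Submodule.span ℂ {x} ⊔ FG G : Submodule ℂ (Fin n → ℂ)) := by
  intro B hBG w hw
  rcases Nat.eq_zero_or_pos n with rfl | hn
  · have : B.mulVec w = 0 := Subsingleton.elim _ _
    rw [this]; exact Submodule.zero_mem _
  obtain ⟨y, hy, z, hz, rfl⟩ := Submodule.mem_sup.1 hw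
  obtain ⟨a, rfl⟩ := Submodule.mem_span_singleton.1 hy
  rw [mulVec_add, mulVec_smul]
  refine Submodule.add_mem _ (Submodule.smul_mem _ _ ?_) ?_
  · set i : Fin n := ⟨0, hn⟩
    have hdecomp : B.mulVec x
        = B i i • x + (B - B i i • (1 : Matrix (Fin n) (Fin n) ℂ)).mulVec x := by
      rw [sub_mulVec, smul_mulVec, one_mulVec]
      abel
    rw [hdecomp]
    exact Submodule.add_mem _
      (Submodule.mem_sup_left (Submodule.smul_mem _ _ (Submodule.mem_span_singleton_self x)))
      (Submodule.mem_sup_right (key hBG (hT B hBG) i x))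
  · exact Submodule.mem_sup_right (FG_inv hT hcomm hBG z hz)
end

section
/- Let G be an abelian sub-semigroup of T_n(ℂ). If there exists u ∈ ℂ* × ℂ^{n−1} (i.e. with first coordinate nonzero) such that the extended limit set J_G(u) equals ℂⁿ, then the subspace F_G has dimension n − 1. -/
open Filter Topology Matrix

lemma isTn_one {n : ℕ} : IsTn (1 : Matrix (Fin n) (Fin n) ℂ) := by
  constructor
  · intro i j hij
    exact Matrix.one_apply_ne (ne_of_lt hij)
  · intro i j; simp [Matrix.one_apply]

lemma IsTn.mul {n : ℕ} {A B : Matrix (Fin n) (Fin n) ℂ} (hA : IsTn A) (hB : IsTn B) :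
    IsTn (A * B) := by
  constructor
  · intro i j hij
    rw [Matrix.mul_apply]
    apply Finset.sum_eq_zero
    intro k _
    rcases lt_or_ge i k with h | h
    · rw [hA.1 i k h, zero_mul]
    · rw [hB.1 k j (lt_of_le_of_lt h hij), mul_zero]
  · intro i j
    have key : ∀ i : Fin n, (A * B) i i = A i i * B i i := by
      intro i
      rw [Matrix.mul_apply]
      rw [Finset.sum_eq_single i]
      · intro k _ hk
        rcases lt_or_lt_iff_ne.mpr hk with h | h
        · rw [hB.1 k i h, mul_zero]
        · rw [hA.1 i k h, zero_mul]
      · intro h; exact absurd (Finset.mem_univ i) h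
    rw [key i, key j, hA.2 i j, hB.2 i j]

lemma isTn_pow {n : ℕ} {A : Matrix (Fin n) (Fin n) ℂ} (hA : IsTn A) (k : ℕ) :
    IsTn (A ^ k) := by
  induction k with
  | zero => simpa using isTn_one
  | succ k ih => rw [pow_succ]; exact ih.mul hA

lemma isTn_listProd {n : ℕ} (l : List (Matrix (Fin n) (Fin n) ℂ))
    (h : ∀ B ∈ l, IsTn B) : IsTn l.prod := by
  induction l with
  | nil => simpa using isTn_one
  | cons a l ih =>
    rw [List.prod_cons]
    exact (h a List.mem_cons_self).mul (ih fun B hB => h B (List.mem_cons_of_mem a hB))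

lemma isTn_mem_genSG {n p : ℕ} {A : Fin p → Matrix (Fin n) (Fin n) ℂ}
    (hT : ∀ j, IsTn (A j)) {B : Matrix (Fin n) (Fin n) ℂ} (hB : B ∈ genSG A) : IsTn B := by
  obtain ⟨k, -, rfl⟩ := hB
  apply isTn_listProd
  intro C hC
  rw [List.mem_ofFn] at hC
  obtain ⟨j, rfl⟩ := hC
  exact isTn_pow (hT j) _

/-- For `B ∈ G` triangular, `B x - μ_B x ∈ F_G`. -/
lemma sub_smul_mem_FG {n : ℕ} (hn : 0 < n) {G : Set (Matrix (Fin n) (Fin n) ℂ)}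
    {B : Matrix (Fin n) (Fin n) ℂ} (hB : IsTn B) (hBG : B ∈ G) (x : Fin n → ℂ) :
    B.mulVec x - B ⟨0, hn⟩ ⟨0, hn⟩ • x ∈ FG G := by
  set μ : ℂ := B ⟨0, hn⟩ ⟨0, hn⟩ with hμ
  have hx : B.mulVec x - μ • x = (B - μ • 1).mulVec x := by
    rw [Matrix.sub_mulVec, Matrix.smul_mulVec, Matrix.one_mulVec]
  rw [hx]
  have hsum : (B - μ • 1).mulVec x = ∑ i, x i • (B - μ • 1).mulVec (Pi.single i 1) := by
    conv_lhs => rw [← Finset.univ_sum_single x]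
    rw [← Matrix.mulVecLin_apply, map_sum]
    congr 1
    funext i
    rw [Matrix.mulVecLin_apply]
    have : (Pi.single i (x i) : Fin n → ℂ) = x i • (Pi.single i 1 : Fin n → ℂ) := by
      rw [← Pi.single_smul, smul_eq_mul, mul_one]
    rw [this, Matrix.mulVec_smul]
  rw [hsum]
  apply Submodule.sum_mem
  intro i _
  apply Submodule.smul_mem
  rcases lt_or_ge (i : ℕ) (n - 1) with hi | hi
  · apply Submodule.subset_span
    refine ⟨B, hBG, i, hi, ?_⟩
    rw [hμ, hB.2 ⟨0, hn⟩ i]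
  · -- i is the last index; the column is zero
    have hlast : (i : ℕ) = n - 1 := le_antisymm (Nat.lt_succ_iff.mp (by omega)) hi
    have : (B - μ • 1).mulVec (Pi.single i 1) = 0 := by
      rw [Matrix.mulVec_single_one]
      funext j
      simp only [Matrix.col_apply, Matrix.sub_apply, Matrix.smul_apply, Matrix.one_apply, smul_eq_mul]
      rcases eq_or_ne j i with rfl | hj
      · simp [hμ, hB.2 j ⟨0, hn⟩]
      · have hji : j < i := by
          have h1 := j.isLt
          have h2 : (j : ℕ) ≠ (i : ℕ) := fun h => hj (Fin.ext h)
          exact Fin.lt_def.mpr (by omega)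
        rw [hB.1 j i hji]
        simp [hj]
    rw [this]
    exact Submodule.zero_mem _

/-- If `G ⊆ T_n(ℂ)` is an abelian semigroup generated by `A 1, …, A p` and `J_G(u) = ℂⁿ`
for some `u` with nonzero first coordinate, then `dim F_G = n - 1`. -/
theorem stmt3 (n p : ℕ) (hn : 0 < n) (A : Fin p → Matrix (Fin n) (Fin n) ℂ)
    (hT : ∀ j, IsTn (A j))
    (hcomm : ∀ i j, A i * A j = A j * A i)
    (u : Fin n → ℂ) (hu : u ⟨0, hn⟩ ≠ 0)
    (hJ : JSet A u = Set.univ) :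
    Module.finrank ℂ (FG (genSG A)) = n - 1 := by
  classical
  set z : Fin n := ⟨0, hn⟩ with hz
  -- Upper bound: FG ⊆ ker (eval at z)
  set φ : (Fin n → ℂ) →ₗ[ℂ] ℂ := LinearMap.proj z with hφ
  have hFGker : FG (genSG A) ≤ LinearMap.ker φ := by
    rw [FG, Submodule.span_le]
    rintro v ⟨B, hBG, i, hi, rfl⟩
    have hB := isTn_mem_genSG hT hBG
    simp only [SetLike.mem_coe, LinearMap.mem_ker, hφ, LinearMap.proj_apply]
    rw [Matrix.mulVec_single_one]
    simp only [Matrix.col_apply, Matrix.sub_apply, Matrix.smul_apply, Matrix.one_apply, smul_eq_mul]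
    rcases eq_or_ne z i with rfl | hzi
    · simp
    · have hzlt : z < i := by
        have h2 : (z : ℕ) ≠ (i : ℕ) := fun h => hzi (Fin.ext h)
        exact Fin.lt_def.mpr (by simp [hz] at h2 ⊢; omega)
      rw [hB.1 z i hzlt]
      simp [hzi]
  have hkerrank : Module.finrank ℂ (LinearMap.ker φ) = n - 1 := by
    have hsurj : Function.Surjective φ := by
      intro c
      exact ⟨Pi.single z c, by simp [hφ]⟩
    have hrange : LinearMap.range φ = ⊤ := LinearMap.range_eq_top.mpr hsurj
    have hrk := LinearMap.finrank_range_add_finrank_ker φ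
    rw [hrange, finrank_top] at hrk
    have hdom : Module.finrank ℂ (Fin n → ℂ) = n := by
      rw [Module.finrank_pi, Fintype.card_fin]
    have hself : Module.finrank ℂ ℂ = 1 := Module.finrank_self ℂ
    omega
  have hupper : Module.finrank ℂ (FG (genSG A)) ≤ n - 1 := by
    rw [← hkerrank]
    exact Submodule.finrank_mono hFGker
  -- Lower bound
  set V : Submodule ℂ (Fin n → ℂ) := Submodule.span ℂ {u} ⊔ FG (genSG A) with hVdef
  have hV : V = ⊤ := by
    rw [eq_top_iff]
    intro y _
    have hy : y ∈ JSet A u := by rw [hJ]; trivial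
    obtain ⟨xs, k, hk, hxs, hlim⟩ := hy
    set Bm : ℕ → Matrix (Fin n) (Fin n) ℂ :=
      fun m => (List.ofFn fun j => A j ^ k m j).prod with hBm
    have hTn : ∀ m, IsTn (Bm m) := by
      intro m
      apply isTn_listProd
      intro C hC
      rw [List.mem_ofFn] at hC
      obtain ⟨j, rfl⟩ := hC
      exact isTn_pow (hT j) _
    have hmemG : ∀ᶠ m in atTop, Bm m ∈ genSG A := by
      filter_upwards [hk.eventually_ge_atTop 1] with m hm
      exact ⟨k m, hm, rfl⟩
    have hcoord : ∀ m (x : Fin n → ℂ), (Bm m).mulVec x z = Bm m z z * x z := by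
      intro m x
      simp only [Matrix.mulVec, dotProduct]
      rw [Finset.sum_eq_single z]
      · intro j _ hj
        have hzlt : z < j := by
          have h2 : (z : ℕ) ≠ (j : ℕ) := fun h => hj (Fin.ext h.symm)
          exact Fin.lt_def.mpr (by simp [hz] at h2 ⊢; omega)
        rw [(hTn m).1 z j hzlt, zero_mul]
      · intro h; exact absurd (Finset.mem_univ z) h
    have hxz : Tendsto (fun m => xs m z) atTop (𝓝 (u z)) :=
      ((continuous_apply z).tendsto u).comp hxs
    have hBz : Tendsto (fun m => (Bm m).mulVec (xs m) z) atTop (𝓝 (y z)) :=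
      ((continuous_apply z).tendsto y).comp hlim
    have hne : ∀ᶠ m in atTop, xs m z ≠ 0 := hxz.eventually_ne hu
    have hdiv : Tendsto (fun m => (Bm m).mulVec (xs m) z / xs m z) atTop
        (𝓝 (y z / u z)) := hBz.div hxz hu
    have hμ : Tendsto (fun m => Bm m z z) atTop (𝓝 (y z / u z)) := by
      apply hdiv.congr'
      filter_upwards [hne] with m hm
      rw [hcoord m (xs m), mul_div_assoc, div_self hm, mul_one]
    have hμx : Tendsto (fun m => Bm m z z • xs m) atTop (𝓝 ((y z / u z) • u)) :=
      hμ.smul hxs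
    have hw : Tendsto (fun m => (Bm m).mulVec (xs m) - Bm m z z • xs m) atTop
        (𝓝 (y - (y z / u z) • u)) := hlim.sub hμx
    have hclosed : IsClosed ((FG (genSG A)) : Set (Fin n → ℂ)) :=
      Submodule.closed_of_finiteDimensional _
    have hwmem : y - (y z / u z) • u ∈ FG (genSG A) := by
      refine hclosed.mem_of_tendsto hw ?_
      filter_upwards [hmemG] with m hm
      exact sub_smul_mem_FG hn (hTn m) hm (xs m)
    have hdecomp : y = (y z / u z) • u + (y - (y z / u z) • u) := by
      rw [add_sub_cancel]
    rw [hdecomp]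
    exact Submodule.add_mem _
      (Submodule.mem_sup_left
        (Submodule.smul_mem _ _ (Submodule.mem_span_singleton_self u)))
      (Submodule.mem_sup_right hwmem)
  have hVrank : Module.finrank ℂ V = n := by
    rw [hV, finrank_top, Module.finrank_pi, Fintype.card_fin]
  have hsup := Submodule.finrank_sup_add_finrank_inf_eq
    (Submodule.span ℂ {u}) (FG (genSG A))
  have hune : u ≠ 0 := fun h => hu (by rw [h]; rfl)
  have hspan1 : Module.finrank ℂ (Submodule.span ℂ ({u} : Set (Fin n → ℂ))) = 1 := by
    rw [finrank_span_singleton hune]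
  rw [← hVdef] at hsup
  omega
end

section
/- Let G be an abelian sub-semigroup of the block-diagonal set K_{η,r}(ℂ) = T_{n_1}(ℂ) ⊕ ⋯ ⊕ T_{n_r}(ℂ). If J_G(u) = ℂⁿ for some u in U = ∏_{k=1}^r (ℂ* × ℂ^{n_k−1}), then for every k = 1,…,r, the k-th block semigroup G_k = {B_k : B ∈ G} satisfies J_{G_k}(u_k) = ℂ^{n_k}, where u = (u_1,…,u_r) with u_k ∈ ℂ^{n_k}. -/
open Filter Topology Matrix

/-- The sub-semigroup of block matrices generated by blockwise generators. -/
def genSGB {r p : ℕ} {nn : Fin r → ℕ}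
    (A : Fin p → ((k : Fin r) → Matrix (Fin (nn k)) (Fin (nn k)) ℂ)) :
    Set ((k : Fin r) → Matrix (Fin (nn k)) (Fin (nn k)) ℂ) :=
  {B | ∃ km : Fin p → ℕ, 0 < ∑ j, km j ∧
    B = fun k => (List.ofFn fun j => A j k ^ km j).prod}

/-- The extended limit set for a semigroup of block-diagonal matrices, acting blockwise
on `ℂⁿ = ∏ k, ℂ^{n_k}`. -/
def JSetB {r p : ℕ} {nn : Fin r → ℕ}
    (A : Fin p → ((k : Fin r) → Matrix (Fin (nn k)) (Fin (nn k)) ℂ))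
    (x : (k : Fin r) → Fin (nn k) → ℂ) : Set ((k : Fin r) → Fin (nn k) → ℂ) :=
  {y | ∃ (xs : ℕ → (k : Fin r) → Fin (nn k) → ℂ) (km : ℕ → Fin p → ℕ),
    Tendsto (fun m => ∑ j, km m j) atTop atTop ∧
    Tendsto xs atTop (𝓝 x) ∧
    Tendsto (fun m k => ((List.ofFn fun j => A j k ^ km m j).prod).mulVec (xs m k))
      atTop (𝓝 y)}

/-- If `J_G(u) = ℂⁿ` for some `u ∈ U`, then each block semigroup `G_k` satisfies
`J_{G_k}(u_k) = ℂ^{n_k}`. -/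
theorem stmt4 (r p : ℕ) (nn : Fin r → ℕ) (hpos : ∀ k, 0 < nn k)
    (A : Fin p → ((k : Fin r) → Matrix (Fin (nn k)) (Fin (nn k)) ℂ))
    (hT : ∀ j k, IsTn (A j k))
    (hcomm : ∀ i j k, A i k * A j k = A j k * A i k)
    (u : (k : Fin r) → Fin (nn k) → ℂ) (hu : ∀ k, u k ⟨0, hpos k⟩ ≠ 0)
    (hJ : JSetB A u = Set.univ) :
    ∀ k : Fin r, JSet (fun j => A j k) (u k) = Set.univ := by
  intro k
  ext y
  simp only [Set.mem_univ, iff_true]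
  have hY : Function.update u k y ∈ JSetB A u := hJ ▸ Set.mem_univ _
  obtain ⟨xs, km, h1, h2, h3⟩ := hY
  refine ⟨fun m => xs m k, km, h1, ?_, ?_⟩
  · exact tendsto_pi_nhds.mp h2 k
  · have := tendsto_pi_nhds.mp h3 k
    simpa [Function.update_self] using this
end

section
/- Let G be an abelian sub-semigroup of T_n(ℂ) with rank(F_G) = n−1. Let u, v ∈ ℂ* × ℂ^{n−1}, (u_m) a sequence in ℂ* × ℂ^{n−1} with u_m → u, and (B_m) a sequence in G with B_m u_m → v. If the sequence of upper-left (n−1)×(n−1) blocks (B_m^{(1)}) is bounded, then (B_m) is bounded. -/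
open Filter Topology Matrix

/-- A sequence of vectors that is bounded uniformly in all coordinates. -/
def BddSeq {n : ℕ} (f : ℕ → Fin n → ℂ) : Prop := ∃ C, 0 ≤ C ∧ ∀ m i, ‖f m i‖ ≤ C

lemma bddSeq_zero {n : ℕ} : BddSeq (fun _ => (0 : Fin n → ℂ)) :=
  ⟨0, le_refl _, by simp⟩

lemma bddSeq_add {n : ℕ} {f g : ℕ → Fin n → ℂ} (hf : BddSeq f) (hg : BddSeq g) :
    BddSeq (fun m => f m + g m) := by
  obtain ⟨C, hC0, hC⟩ := hf; obtain ⟨D, hD0, hD⟩ := hg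
  exact ⟨C + D, by positivity, fun m i => (norm_add_le _ _).trans (add_le_add (hC m i) (hD m i))⟩

lemma bddSeq_sub {n : ℕ} {f g : ℕ → Fin n → ℂ} (hf : BddSeq f) (hg : BddSeq g) :
    BddSeq (fun m => f m - g m) := by
  obtain ⟨C, hC0, hC⟩ := hf; obtain ⟨D, hD0, hD⟩ := hg
  refine ⟨C + D, by positivity, fun m i => ?_⟩
  simpa using (norm_sub_le (f m i) (g m i)).trans (add_le_add (hC m i) (hD m i))

lemma bddSeq_smul {n : ℕ} {a : ℕ → ℂ} {f : ℕ → Fin n → ℂ}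
    (ha : ∃ c, ∀ m, ‖a m‖ ≤ c) (hf : BddSeq f) : BddSeq (fun m => a m • f m) := by
  obtain ⟨c, hc⟩ := ha; obtain ⟨C, hC0, hC⟩ := hf
  have hc0 : 0 ≤ c := le_trans (norm_nonneg _) (hc 0)
  refine ⟨c * C, by positivity, fun m i => ?_⟩
  simp only [Pi.smul_apply, smul_eq_mul, norm_mul]
  exact mul_le_mul (hc m) (hC m i) (norm_nonneg _) hc0

lemma bddSeq_sum {n : ℕ} {ι : Type*} (s : Finset ι) (f : ι → ℕ → Fin n → ℂ)
    (h : ∀ k ∈ s, BddSeq (f k)) : BddSeq (fun m => ∑ k ∈ s, f k m) := by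
  classical
  induction s using Finset.induction_on with
  | empty => simpa using bddSeq_zero
  | @insert a s' hx ih =>
    simp only [Finset.sum_insert hx]
    exact bddSeq_add (h a (Finset.mem_insert_self a s'))
      (ih fun k hk => h k (Finset.mem_insert_of_mem hk))

lemma bddscalar_of_tendsto {f : ℕ → ℂ} {l : ℂ} (h : Tendsto f atTop (𝓝 l)) :
    ∃ c, ∀ m, ‖f m‖ ≤ c := by
  obtain ⟨C, hC⟩ := h.norm.bddAbove_range
  exact ⟨C, fun m => hC (Set.mem_range_self m)⟩

lemma bddSeq_of_tendsto {n : ℕ} {f : ℕ → Fin n → ℂ} {l : Fin n → ℂ}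
    (h : Tendsto f atTop (𝓝 l)) : BddSeq f := by
  have h1 : ∀ i, ∃ c, ∀ m, ‖f m i‖ ≤ c := fun i =>
    bddscalar_of_tendsto (tendsto_pi_nhds.1 h i)
  choose C hC using h1
  refine ⟨∑ i, max (C i) 0, Finset.sum_nonneg (fun i _ => le_max_right _ _), fun m i => ?_⟩
  have h2 : max (C i) 0 ≤ ∑ k, max (C k) 0 :=
    Finset.single_le_sum (f := fun k => max (C k) 0) (fun k _ => le_max_right _ _)
      (Finset.mem_univ i)
  exact le_trans (le_trans (hC i m) (le_max_left _ _)) h2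

lemma matrix_entries_bdd {n : ℕ} (M : Matrix (Fin n) (Fin n) ℂ) :
    ∃ D, 0 ≤ D ∧ ∀ r j, ‖M r j‖ ≤ D := by
  refine ⟨∑ r, ∑ j, ‖M r j‖, by positivity, fun r j => ?_⟩
  calc ‖M r j‖ ≤ ∑ j', ‖M r j'‖ :=
        Finset.single_le_sum (fun _ _ => norm_nonneg _) (Finset.mem_univ j)
    _ ≤ ∑ r', ∑ j', ‖M r' j'‖ :=
        Finset.single_le_sum (fun _ _ => Finset.sum_nonneg fun _ _ => norm_nonneg _)
          (Finset.mem_univ r)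

/-- If `rank F_G = n-1`, `u_m → u`, `B_m u_m → v` (first coordinates nonzero) and the
upper-left `(n-1)×(n-1)` blocks of `B_m` are bounded, then `(B_m)` is bounded. -/
theorem stmt7 (n : ℕ) (hn : 0 < n) (G : Set (Matrix (Fin n) (Fin n) ℂ))
    (hT : ∀ B ∈ G, IsTn B)
    (hmul : ∀ A ∈ G, ∀ B ∈ G, A * B ∈ G)
    (hcomm : ∀ A ∈ G, ∀ B ∈ G, A * B = B * A)
    (hrank : Module.finrank ℂ (FG G) = n - 1)
    (u v : Fin n → ℂ) (hu : u ⟨0, hn⟩ ≠ 0) (hv : v ⟨0, hn⟩ ≠ 0)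
    (um : ℕ → Fin n → ℂ) (hum0 : ∀ m, um m ⟨0, hn⟩ ≠ 0)
    (humlim : Tendsto um atTop (𝓝 u))
    (Bm : ℕ → Matrix (Fin n) (Fin n) ℂ) (hBmG : ∀ m, Bm m ∈ G)
    (hlim : Tendsto (fun m => (Bm m).mulVec (um m)) atTop (𝓝 v))
    (hblock : ∃ C, ∀ m, ∀ i j : Fin n, (i : ℕ) < n - 1 → (j : ℕ) < n - 1 →
      ‖Bm m i j‖ ≤ C) :
    ∃ C, ∀ m, ∀ i j : Fin n, ‖Bm m i j‖ ≤ C := by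
  classical
  set i0 : Fin n := ⟨0, hn⟩ with hi0
  obtain ⟨C0, hC0⟩ := hblock
  set C : ℝ := max C0 0 with hCdef
  have hCnn : 0 ≤ C := le_max_right _ _
  have hC : ∀ m, ∀ i j : Fin n, (i : ℕ) < n - 1 → (j : ℕ) < n - 1 → ‖Bm m i j‖ ≤ C :=
    fun m i j hi hj => (hC0 m i j hi hj).trans (le_max_left _ _)
  -- Step 1: boundedness of m ↦ Bm m *ᵥ w for w ∈ FG G
  have key : ∀ w ∈ FG G, BddSeq (fun m => (Bm m).mulVec w) := by
    intro w hw
    simp only [FG] at hw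
    induction hw using Submodule.span_induction with
    | mem x hx =>
      obtain ⟨A, hA, i, hi, rfl⟩ := hx
      set N : Matrix (Fin n) (Fin n) ℂ := A - A i i • 1 with hN
      obtain ⟨D, hD0, hD⟩ := matrix_entries_bdd N
      have hcom : ∀ m, Bm m * N = N * Bm m := by
        intro m
        simp only [hN, Matrix.mul_sub, Matrix.sub_mul, Matrix.mul_smul, Matrix.smul_mul,
          Matrix.mul_one, Matrix.one_mul, hcomm A hA (Bm m) (hBmG m)]
      have hN0 : ∀ r j : Fin n, ¬ ((j : ℕ) < n - 1) → N r j = 0 := by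
        intro r j hj
        have hrj : r ≤ j := by
          have := r.isLt; have := j.isLt
          exact Fin.le_def.2 (by omega)
        rcases lt_or_eq_of_le hrj with h | h
        · have h1 : A r j = 0 := (hT A hA).1 r j h
          have h2 : (1 : Matrix (Fin n) (Fin n) ℂ) r j = 0 := Matrix.one_apply_ne (ne_of_lt h)
          simp [hN, Matrix.sub_apply, Matrix.smul_apply, h1, h2]
        · subst h
          have h2 : A r r = A i i := (hT A hA).2 r i
          simp [hN, Matrix.sub_apply, Matrix.smul_apply, Matrix.one_apply_eq, h2]
      refine ⟨n * (D * C), by positivity, fun m r => ?_⟩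
      have hrw : (Bm m).mulVec (N.mulVec (Pi.single i 1)) =
          N.mulVec ((Bm m).mulVec (Pi.single i 1)) := by
        rw [Matrix.mulVec_mulVec, Matrix.mulVec_mulVec, hcom]
      show ‖((Bm m).mulVec (N.mulVec (Pi.single i 1))) r‖ ≤ n * (D * C)
      rw [hrw, Matrix.mulVec_mulVec, Matrix.mulVec_single]
      have hterm : ∀ j : Fin n, ‖N r j * Bm m j i‖ ≤ D * C := by
        intro j
        by_cases hj : (j : ℕ) < n - 1
        · rw [norm_mul]
          exact mul_le_mul (hD r j) (hC m j i hj hi) (norm_nonneg _) hD0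
        · simp [hN0 r j hj]; positivity
      calc ‖(N * Bm m) r i * 1‖ = ‖∑ j, N r j * Bm m j i‖ := by
            rw [mul_one]; rfl
        _ ≤ ∑ j : Fin n, ‖N r j * Bm m j i‖ := norm_sum_le _ _
        _ ≤ ∑ _j : Fin n, D * C := Finset.sum_le_sum fun j _ => hterm j
        _ = n * (D * C) := by simp [Finset.sum_const, Finset.card_univ, nsmul_eq_mul]
    | zero => simpa [Matrix.mulVec_zero] using bddSeq_zero (n := n)
    | add x y hx hy ihx ihy => simpa [Matrix.mulVec_add] using bddSeq_add ihx ihy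
    | smul a x hx ih =>
      simpa [Matrix.mulVec_smul] using bddSeq_smul ⟨‖a‖, fun _ => le_refl _⟩ ih
  -- Step 2: FG G is the hyperplane of vectors vanishing at i0
  have hW : FG G = LinearMap.ker (LinearMap.proj i0 : (Fin n → ℂ) →ₗ[ℂ] ℂ) := by
    have hle : FG G ≤ LinearMap.ker (LinearMap.proj i0 : (Fin n → ℂ) →ₗ[ℂ] ℂ) := by
      rw [FG, Submodule.span_le]
      rintro w ⟨A, hA, i, hi, rfl⟩
      simp only [SetLike.mem_coe, LinearMap.mem_ker, LinearMap.proj_apply]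
      rw [Matrix.mulVec_single]
      rcases Nat.eq_zero_or_pos (i : ℕ) with h | h
      · have hii : i = i0 := Fin.ext (by simp [hi0, h])
        subst hii
        simp [Matrix.sub_apply, Matrix.smul_apply, Matrix.one_apply_eq]
      · have hlt : i0 < i := Fin.lt_def.2 (by simp [hi0, h])
        have h1 : A i0 i = 0 := (hT A hA).1 i0 i hlt
        have h2 : (1 : Matrix (Fin n) (Fin n) ℂ) i0 i = 0 := Matrix.one_apply_ne (ne_of_lt hlt)
        simp [Matrix.sub_apply, Matrix.smul_apply, h1, h2]
    refine Submodule.eq_of_le_of_finrank_eq hle ?_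
    rw [hrank]
    have hsurj : LinearMap.range (LinearMap.proj i0 : (Fin n → ℂ) →ₗ[ℂ] ℂ) = ⊤ := by
      rw [LinearMap.range_eq_top]
      intro c
      exact ⟨Pi.single i0 c, by simp [LinearMap.proj_apply]⟩
    have hrn := LinearMap.finrank_range_add_finrank_ker
      (LinearMap.proj i0 : (Fin n → ℂ) →ₗ[ℂ] ℂ)
    rw [hsurj, finrank_top] at hrn
    have hpi : Module.finrank ℂ (Fin n → ℂ) = n := by simp
    have hcc : Module.finrank ℂ ℂ = 1 := Module.finrank_self ℂ
    omega
  -- Step 3: columns other than i0 are bounded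
  have hcol : ∀ k : Fin n, k ≠ i0 → BddSeq (fun m => (Bm m).mulVec (Pi.single k 1)) := by
    intro k hk
    apply key
    rw [hW]
    simp [LinearMap.mem_ker, LinearMap.proj_apply, Pi.single_eq_of_ne (Ne.symm hk)]
  -- Step 4: column i0 is bounded
  have hum_expand : ∀ m, (Bm m).mulVec (um m) =
      ∑ k : Fin n, um m k • (Bm m).mulVec (Pi.single k 1) := by
    intro m
    have h1 : um m = ∑ k : Fin n, um m k • (Pi.single k 1 : Fin n → ℂ) := by
      ext j
      simp [Finset.sum_apply, Pi.single_apply]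
    conv_lhs => rw [h1]
    simp only [← Matrix.mulVecLin_apply, map_sum, LinearMap.map_smul]
  have hsplit : ∀ m, (Bm m).mulVec (Pi.single i0 1) = (um m i0)⁻¹ •
      ((Bm m).mulVec (um m) -
        ∑ k ∈ Finset.univ.erase i0, um m k • (Bm m).mulVec (Pi.single k 1)) := by
    intro m
    have h1 : (Bm m).mulVec (um m) = um m i0 • (Bm m).mulVec (Pi.single i0 1) +
        ∑ k ∈ Finset.univ.erase i0, um m k • (Bm m).mulVec (Pi.single k 1) := by
      rw [hum_expand m, ← Finset.add_sum_erase _ _ (Finset.mem_univ i0)]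
    rw [h1]
    rw [add_sub_cancel_right, inv_smul_smul₀ (hum0 m)]
  have hcol0 : BddSeq (fun m => (Bm m).mulVec (Pi.single i0 1)) := by
    have hinv : ∃ c, ∀ m, ‖(um m i0)⁻¹‖ ≤ c :=
      bddscalar_of_tendsto ((tendsto_pi_nhds.1 humlim i0).inv₀ hu)
    have hb : BddSeq (fun m => (Bm m).mulVec (um m) -
        ∑ k ∈ Finset.univ.erase i0, um m k • (Bm m).mulVec (Pi.single k 1)) := by
      apply bddSeq_sub (bddSeq_of_tendsto hlim)
      apply bddSeq_sum
      intro k hk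
      exact bddSeq_smul (bddscalar_of_tendsto (tendsto_pi_nhds.1 humlim k))
        (hcol k (Finset.ne_of_mem_erase hk))
    have := bddSeq_smul hinv hb
    obtain ⟨E, hE0, hE⟩ := this
    refine ⟨E, hE0, fun m r => ?_⟩
    simpa only [hsplit m] using hE m r
  -- Step 5: combine all columns
  have hallcol : ∀ k : Fin n, BddSeq (fun m => (Bm m).mulVec (Pi.single k 1)) := by
    intro k
    by_cases hk : k = i0
    · subst hk; exact hcol0
    · exact hcol k hk
  choose Cc hCc using hallcol
  refine ⟨∑ k, Cc k, fun m i j => ?_⟩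
  have h1 : Bm m i j = ((Bm m).mulVec (Pi.single j 1)) i := by
    simp [Matrix.mulVec_single]
  rw [h1]
  refine le_trans ((hCc j).2 m i) ?_
  exact Finset.single_le_sum (fun k _ => (hCc k).1) (Finset.mem_univ j)
end

section
/- Let G be an abelian sub-semigroup of T_n(ℂ) with rank(F_G) = n−1. Let u, v ∈ ℂ* × ℂ^{n−1}. If there exist sequences (u_m) in ℂ* × ℂ^{n−1} with u_m → u and (B_m) in G with B_m u_m → v, then the sequence (B_m) is bounded in M_n(ℂ). -/
open Filter Topology Matrix

/-- coordinate-vanishing filtration -/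
noncomputable def Ek (n k : ℕ) : Submodule ℂ (Fin n → ℂ) where
  carrier := {w | ∀ j : Fin n, (j : ℕ) < k → w j = 0}
  add_mem' := fun ha hb j hj => by simp [ha j hj, hb j hj]
  zero_mem' := fun j hj => rfl
  smul_mem' := fun c w hw j hj => by simp [hw j hj]

lemma mem_Ek {n k : ℕ} {w : Fin n → ℂ} : w ∈ Ek n k ↔ ∀ j : Fin n, (j : ℕ) < k → w j = 0 :=
  Iff.rfl

/-- "strictly lower": vanishing on and above diagonal -/
def SL {n : ℕ} (N : Matrix (Fin n) (Fin n) ℂ) : Prop :=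
  ∀ i j : Fin n, i ≤ j → N i j = 0

lemma SL_of_G {n : ℕ} {G : Set (Matrix (Fin n) (Fin n) ℂ)} (hT : ∀ B ∈ G, IsTn B)
    {B : Matrix (Fin n) (Fin n) ℂ} (hB : B ∈ G) (i0 : Fin n) :
    SL (B - B i0 i0 • (1 : Matrix (Fin n) (Fin n) ℂ)) := by
  intro i j hij
  rcases lt_or_eq_of_le hij with h | h
  · simp [Matrix.sub_apply, (hT B hB).1 i j h, Matrix.smul_apply, Matrix.one_apply_ne (ne_of_lt h)]
  · subst h
    simp [Matrix.sub_apply, Matrix.smul_apply, Matrix.one_apply_eq, (hT B hB).2 i i0]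

lemma SL_mulVec_Ek {n : ℕ} {N : Matrix (Fin n) (Fin n) ℂ} (hN : SL N) {k : ℕ}
    {w : Fin n → ℂ} (hw : w ∈ Ek n k) : N.mulVec w ∈ Ek n (k + 1) := by
  intro j hj
  show (∑ q, N j q * w q) = 0
  refine Finset.sum_eq_zero fun q _ => ?_
  rcases lt_or_ge (q : ℕ) k with h | h
  · rw [hw q h, mul_zero]
  · have : j ≤ q := by
      rw [Fin.le_def]
      omega
    rw [hN j q this, zero_mul]

lemma FG_le_Ek1 {n : ℕ} (hn : 0 < n) (G : Set (Matrix (Fin n) (Fin n) ℂ))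
    (hT : ∀ B ∈ G, IsTn B) : FG G ≤ Ek n 1 := by
  refine Submodule.span_le.2 ?_
  rintro v ⟨B, hB, i, hi, rfl⟩
  exact fun j hj => by
    have := SL_mulVec_Ek (SL_of_G hT hB i) (k := 0) (w := Pi.single i 1) (fun q hq => absurd hq (by omega))
    exact this j hj

lemma finrank_Ek1 {n : ℕ} (hn : 0 < n) : Module.finrank ℂ (Ek n 1) = n - 1 := by
  have hker : Ek n 1 = LinearMap.ker (LinearMap.proj (R := ℂ) (φ := fun _ : Fin n => ℂ) ⟨0, hn⟩) := by
    ext w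
    simp only [mem_Ek, LinearMap.mem_ker, LinearMap.proj_apply]
    constructor
    · intro h; exact h ⟨0, hn⟩ Nat.zero_lt_one
    · intro h j hj
      have : j = ⟨0, hn⟩ := by
        apply Fin.ext; simpa using Nat.lt_one_iff.1 hj
      rw [this]; exact h
  have hsurj : Function.Surjective (LinearMap.proj (R := ℂ) (φ := fun _ : Fin n => ℂ) ⟨0, hn⟩) := by
    intro c; exact ⟨fun _ => c, rfl⟩
  have h := LinearMap.finrank_range_add_finrank_ker (LinearMap.proj (R := ℂ) (φ := fun _ : Fin n => ℂ) ⟨0, hn⟩)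
  rw [LinearMap.range_eq_top.2 hsurj] at h
  simp only [finrank_top] at h
  rw [hker]
  have h1 : Module.finrank ℂ (Fin n → ℂ) = n := by simp
  have h2 : Module.finrank ℂ ℂ = 1 := Module.finrank_self ℂ
  omega

lemma FG_eq_Ek1 {n : ℕ} (hn : 0 < n) (G : Set (Matrix (Fin n) (Fin n) ℂ))
    (hT : ∀ B ∈ G, IsTn B) (hrank : Module.finrank ℂ (FG G) = n - 1) :
    FG G = Ek n 1 :=
  Submodule.eq_of_le_of_finrank_eq (FG_le_Ek1 hn G hT) (by rw [hrank, finrank_Ek1 hn])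

noncomputable def mvu {n : ℕ} (u : Fin n → ℂ) :
    Matrix (Fin n) (Fin n) ℂ →ₗ[ℂ] (Fin n → ℂ) where
  toFun M := M.mulVec u
  map_add' A B := Matrix.add_mulVec A B u
  map_smul' c A := Matrix.smul_mulVec c A u

lemma cyclic {n : ℕ} (hn : 0 < n) (G : Set (Matrix (Fin n) (Fin n) ℂ))
    (hT : ∀ B ∈ G, IsTn B) (hrank : Module.finrank ℂ (FG G) = n - 1)
    (u : Fin n → ℂ) (hu : u ⟨0, hn⟩ ≠ 0) :
    Submodule.map (mvu u) (Subalgebra.toSubmodule (Algebra.adjoin ℂ G)) = ⊤ := by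
  set z : Fin n := ⟨0, hn⟩
  set W := Submodule.map (mvu u) (Subalgebra.toSubmodule (Algebra.adjoin ℂ G)) with hW
  have huW : u ∈ W := ⟨1, Subalgebra.one_mem _, Matrix.one_mulVec u⟩
  have hNW : ∀ (B : Matrix (Fin n) (Fin n) ℂ), B ∈ G → ∀ i0 : Fin n, ∀ w ∈ W,
      (B - B i0 i0 • (1 : Matrix (Fin n) (Fin n) ℂ)).mulVec w ∈ W := by
    rintro B hB i0 w ⟨M, hM, rfl⟩
    refine ⟨(B - B i0 i0 • 1) * M, ?_, ?_⟩
    · have h1 : B ∈ Algebra.adjoin ℂ G := Algebra.subset_adjoin hB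
      have h2 : B i0 i0 • (1 : Matrix (Fin n) (Fin n) ℂ) ∈ Algebra.adjoin ℂ G :=
        Subalgebra.smul_mem _ (Subalgebra.one_mem _) _
      exact Subalgebra.mul_mem _ (Subalgebra.sub_mem _ h1 h2) hM
    · show (_ * M).mulVec u = (B - B i0 i0 • 1).mulVec (mvu u M)
      rw [show mvu u M = M.mulVec u from rfl, Matrix.mulVec_mulVec]
  -- the induction
  have main : ∀ k : ℕ, W ⊔ Ek n (k + 1) = ⊤ := by
    intro k
    induction k with
    | zero =>
      rw [eq_top_iff]
      intro w _
      have : w - (w z / u z) • u ∈ Ek n 1 := by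
        intro j hj
        have hjz : j = z := Fin.ext (by simpa using Nat.lt_one_iff.1 hj)
        subst hjz
        simp only [Pi.sub_apply, Pi.smul_apply, smul_eq_mul]
        field_simp
        simp
      have : w = (w z / u z) • u + (w - (w z / u z) • u) := by abel
      rw [this]
      exact Submodule.add_mem _
        (Submodule.mem_sup_left (Submodule.smul_mem _ _ huW))
        (Submodule.mem_sup_right ‹w - (w z / u z) • u ∈ Ek n 1›)
    | succ k ih =>
      have hEkle : Ek n (k + 1) ≤ W ⊔ Ek n (k + 2) := by
        intro w hw
        by_cases hkn : k + 1 < n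
        · set i : Fin n := ⟨k + 1, hkn⟩ with hi
          have hrest : w - w i • (Pi.single i 1 : Fin n → ℂ) ∈ Ek n (k + 2) := by
            intro j hj
            simp only [Pi.sub_apply, Pi.smul_apply, smul_eq_mul]
            by_cases hji : j = i
            · subst hji; simp
            · rw [Pi.single_eq_of_ne hji, mul_zero, sub_zero]
              have : (j : ℕ) < k + 1 := by
                rcases Nat.lt_succ_iff_lt_or_eq.1 hj with h | h
                · exact h
                · exact absurd (Fin.ext h : j = i) hji
              exact hw j this
          have hsingle : (Pi.single i 1 : Fin n → ℂ) ∈ W ⊔ Ek n (k + 2) := by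
            have hmem1 : Pi.single i (1 : ℂ) ∈ FG G := by
              rw [FG_eq_Ek1 hn G hT hrank]
              intro j hj
              have hjz : j = z := Fin.ext (by simpa using Nat.lt_one_iff.1 hj)
              subst hjz
              exact Pi.single_eq_of_ne (by simp [hi, z, Fin.ext_iff]) 1
            -- FG ≤ W ⊔ Ek n (k+2)
            have hFle : FG G ≤ W ⊔ Ek n (k + 2) := by
              refine Submodule.span_le.2 ?_
              rintro v ⟨B, hB, i', hi', rfl⟩
              have hsi' : Pi.single i' (1 : ℂ) ∈ W ⊔ Ek n (k + 1) := by
                rw [ih]; trivial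
              rcases Submodule.mem_sup.1 hsi' with ⟨a, ha, b, hb, hab⟩
              rw [← hab, Matrix.mulVec_add]
              exact Submodule.add_mem _
                (Submodule.mem_sup_left (hNW B hB i' a ha))
                (Submodule.mem_sup_right (SL_mulVec_Ek (SL_of_G hT hB i') hb))
            exact hFle hmem1
          have : w = (w - w i • (Pi.single i 1 : Fin n → ℂ)) + w i • (Pi.single i 1 : Fin n → ℂ) := by abel
          rw [this]
          exact Submodule.add_mem _ (Submodule.mem_sup_right hrest)
            (Submodule.smul_mem _ _ hsingle)
        · -- k+1 ≥ n : w = 0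
          have : w = 0 := by
            funext j
            exact hw j (by omega)
          rw [this]
          exact Submodule.zero_mem _
      rw [eq_top_iff, ← ih]
      exact sup_le le_sup_left hEkle
  have hbot : Ek n n = (⊥ : Submodule ℂ (Fin n → ℂ)) := by
    rw [eq_bot_iff]
    intro w hw
    have : w = 0 := funext fun j => hw j j.isLt
    simp [this]
  have := main (n - 1)
  rw [show n - 1 + 1 = n by omega, hbot, sup_bot_eq] at this
  exact this

lemma inject {n : ℕ} (hn : 0 < n) (G : Set (Matrix (Fin n) (Fin n) ℂ))
    (hT : ∀ B ∈ G, IsTn B)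
    (hcomm : ∀ A ∈ G, ∀ B ∈ G, A * B = B * A)
    (hrank : Module.finrank ℂ (FG G) = n - 1)
    (u : Fin n → ℂ) (hu : u ⟨0, hn⟩ ≠ 0)
    (N : Matrix (Fin n) (Fin n) ℂ)
    (hN : N ∈ Submodule.span ℂ {N | ∃ B ∈ G, N = B - B ⟨0, hn⟩ ⟨0, hn⟩ • (1 : Matrix (Fin n) (Fin n) ℂ)})
    (hNu : N.mulVec u = 0) : N = 0 := by
  set z : Fin n := ⟨0, hn⟩
  -- N commutes with every element of the adjoin algebra
  have hGcent : ∀ M ∈ Algebra.adjoin ℂ G, ∀ B ∈ G, B * M = M * B := by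
    intro M hM
    have : Algebra.adjoin ℂ G ≤ Subalgebra.centralizer ℂ G :=
      Algebra.adjoin_le (fun B hB => (Subalgebra.mem_centralizer_iff ℂ).2 fun B' hB' => hcomm B' hB' B hB)
    exact (Subalgebra.mem_centralizer_iff ℂ).1 (this hM)
  have hNcomm : ∀ M ∈ Algebra.adjoin ℂ G, N * M = M * N := by
    clear hNu
    induction hN using Submodule.span_induction with
    | mem x hx =>
      intro M hM
      obtain ⟨B, hB, rfl⟩ := hx
      have h1 : B * M = M * B := hGcent M hM B hB
      have h2 : (B z z • (1 : Matrix (Fin n) (Fin n) ℂ)) * M = M * (B z z • 1) := by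
        simp [Matrix.smul_mul, Matrix.mul_smul]
      simp only [Matrix.sub_mul, Matrix.mul_sub, h1, h2]
    | zero => intro M hM; simp
    | add x y hx hy ihx ihy => intro M hM; simp [Matrix.add_mul, Matrix.mul_add, ihx M hM, ihy M hM]
    | smul c x hx ihx => intro M hM; simp [Matrix.smul_mul, Matrix.mul_smul, ihx M hM]
  -- N annihilates W = ⊤
  have hW := cyclic hn G hT hrank u hu
  have hann : ∀ w : Fin n → ℂ, N.mulVec w = 0 := by
    intro w
    have hwW : w ∈ Submodule.map (mvu u) (Subalgebra.toSubmodule (Algebra.adjoin ℂ G)) := by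
      rw [hW]; trivial
    obtain ⟨M, hM, rfl⟩ := hwW
    show N.mulVec (M.mulVec u) = 0
    rw [Matrix.mulVec_mulVec, hNcomm M hM, ← Matrix.mulVec_mulVec, hNu, Matrix.mulVec_zero]
  ext i j
  have := congrFun (hann (Pi.single j 1)) i
  simpa using this

lemma lin_bound {n : ℕ} (φ : (Fin n → ℂ) →ₗ[ℂ] ℂ) :
    ∃ c : ℝ, 0 ≤ c ∧ ∀ w : Fin n → ℂ, ‖φ w‖ ≤ c * ‖w‖ := by
  refine ⟨∑ q : Fin n, ‖φ (Pi.single q 1)‖, Finset.sum_nonneg fun q _ => norm_nonneg _, fun w => ?_⟩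
  have hw : w = ∑ q : Fin n, w q • (Pi.single q 1 : Fin n → ℂ) :=
    calc w = ∑ q : Fin n, Pi.single q (w q) := (Finset.univ_sum_single w).symm
      _ = ∑ q : Fin n, w q • (Pi.single q 1 : Fin n → ℂ) :=
        Finset.sum_congr rfl fun q _ => by rw [← Pi.single_smul, smul_eq_mul, mul_one]
  calc ‖φ w‖ = ‖∑ q : Fin n, w q • φ (Pi.single q 1)‖ := by
        conv_lhs => rw [hw]
        rw [map_sum]
        simp only [_root_.map_smul]
    _ ≤ ∑ q : Fin n, ‖w q • φ (Pi.single q 1)‖ := norm_sum_le _ _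
    _ ≤ ∑ q : Fin n, ‖φ (Pi.single q 1)‖ * ‖w‖ := by
        refine Finset.sum_le_sum fun q _ => ?_
        rw [norm_smul, mul_comm]
        exact mul_le_mul_of_nonneg_left (norm_le_pi_norm w q) (norm_nonneg _)
    _ = (∑ q : Fin n, ‖φ (Pi.single q 1)‖) * ‖w‖ := (Finset.sum_mul _ _ _).symm

lemma glob {f : ℕ → ℝ} {D : ℝ} (h : ∀ᶠ m in atTop, f m ≤ D) : ∃ C, ∀ m, f m ≤ C := by
  obtain ⟨m₀, hm₀⟩ := eventually_atTop.1 h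
  refine ⟨max D 0 + ∑ m ∈ Finset.range m₀, |f m|, fun m => ?_⟩
  have hs : (0:ℝ) ≤ ∑ m ∈ Finset.range m₀, |f m| :=
    Finset.sum_nonneg fun i _ => abs_nonneg _
  rcases le_or_gt m₀ m with h1 | h1
  · have := hm₀ m h1
    have : f m ≤ max D 0 := le_trans this (le_max_left _ _)
    linarith
  · have h2 : f m ≤ |f m| := le_abs_self _
    have h3 : |f m| ≤ ∑ m ∈ Finset.range m₀, |f m| :=
      Finset.single_le_sum (f := fun i => |f i|) (fun i _ => abs_nonneg _) (Finset.mem_range.2 h1)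
    have h4 : (0:ℝ) ≤ max D 0 := le_max_right _ _
    linarith

noncomputable def entryLM {n : ℕ} (i j : Fin n) : Matrix (Fin n) (Fin n) ℂ →ₗ[ℂ] ℂ where
  toFun M := M i j
  map_add' _ _ := rfl
  map_smul' _ _ := rfl

/-- If `rank F_G = n-1`, `u_m → u`, `B_m u_m → v` with first coordinates nonzero,
then `(B_m)` is bounded. -/
theorem stmt8 (n : ℕ) (hn : 0 < n) (G : Set (Matrix (Fin n) (Fin n) ℂ))
    (hT : ∀ B ∈ G, IsTn B)
    (hmul : ∀ A ∈ G, ∀ B ∈ G, A * B ∈ G)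
    (hcomm : ∀ A ∈ G, ∀ B ∈ G, A * B = B * A)
    (hrank : Module.finrank ℂ (FG G) = n - 1)
    (u v : Fin n → ℂ) (hu : u ⟨0, hn⟩ ≠ 0) (hv : v ⟨0, hn⟩ ≠ 0)
    (um : ℕ → Fin n → ℂ) (hum0 : ∀ m, um m ⟨0, hn⟩ ≠ 0)
    (humlim : Tendsto um atTop (𝓝 u))
    (Bm : ℕ → Matrix (Fin n) (Fin n) ℂ) (hBmG : ∀ m, Bm m ∈ G)
    (hlim : Tendsto (fun m => (Bm m).mulVec (um m)) atTop (𝓝 v)) :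
    ∃ C, ∀ m, ∀ i j : Fin n, ‖Bm m i j‖ ≤ C := by
  set z : Fin n := ⟨0, hn⟩ with hz
  set V : Submodule ℂ (Matrix (Fin n) (Fin n) ℂ) :=
    Submodule.span ℂ {N | ∃ B ∈ G, N = B - B z z • (1 : Matrix (Fin n) (Fin n) ℂ)} with hV
  have hker : LinearMap.ker ((mvu u).domRestrict V) = ⊥ := by
    rw [LinearMap.ker_eq_bot']
    rintro ⟨N, hN⟩ hΨ
    have hNu : N.mulVec u = 0 := hΨ
    exact Subtype.ext (inject hn G hT hcomm hrank u hu N hN hNu)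
  obtain ⟨g, hg⟩ := LinearMap.exists_leftInverse_of_injective _ hker
  set G' : (Fin n → ℂ) →ₗ[ℂ] Matrix (Fin n) (Fin n) ℂ := V.subtype.comp g with hG'def
  have hG' : ∀ N, ∀ hN : N ∈ V, G' (N.mulVec u) = N := by
    intro N hN
    have h0 : (g.comp ((mvu u).domRestrict V)) ⟨N, hN⟩ = ⟨N, hN⟩ := by rw [hg]; rfl
    calc G' (N.mulVec u) = V.subtype ((g ∘ₗ (mvu u).domRestrict V) ⟨N, hN⟩) := rfl
      _ = V.subtype ⟨N, hN⟩ := by rw [h0]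
      _ = N := rfl
  have hcex : ∀ p : Fin n × Fin n, ∃ c : ℝ, 0 ≤ c ∧
      ∀ w : Fin n → ℂ, ‖G' w p.1 p.2‖ ≤ c * ‖w‖ := by
    intro p
    obtain ⟨c, hc0, hcb⟩ := lin_bound ((entryLM p.1 p.2).comp G')
    exact ⟨c, hc0, fun w => hcb w⟩
  choose cc hcc0 hccb using hcex
  set c' : ℝ := ∑ p : Fin n × Fin n, cc p with hc'
  have hc'0 : 0 ≤ c' := Finset.sum_nonneg fun p _ => hcc0 p
  set μm : ℕ → ℂ := fun m => Bm m z z with hμm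
  have hrow : ∀ m, (Bm m).mulVec (um m) z = μm m * um m z := by
    intro m
    have h1 : (Bm m).mulVec (um m) z = ∑ j, Bm m z j * um m j := rfl
    rw [h1]
    refine Finset.sum_eq_single_of_mem z (Finset.mem_univ z) fun j _ hj => ?_
    have hzj : z < j := by
      rw [Fin.lt_def]
      have : (j : ℕ) ≠ 0 := fun h => hj (Fin.ext (by simp [hz, h]))
      simp only [hz]
      omega
    rw [(hT (Bm m) (hBmG m)).1 z j hzj, zero_mul]
  have hBulim : Tendsto (fun m => (Bm m).mulVec (um m) z) atTop (𝓝 (v z)) :=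
    tendsto_pi_nhds.1 hlim z
  have humzlim : Tendsto (fun m => um m z) atTop (𝓝 (u z)) := tendsto_pi_nhds.1 humlim z
  have hμeq : ∀ m, μm m = (Bm m).mulVec (um m) z / um m z := by
    intro m
    rw [eq_div_iff (hum0 m), ← hrow m]
  have hμlim : Tendsto μm atTop (𝓝 (v z / u z)) :=
    Tendsto.congr (fun m => (hμeq m).symm) (hBulim.div humzlim hu)
  set Nm : ℕ → Matrix (Fin n) (Fin n) ℂ := fun m => Bm m - μm m • 1 with hNm
  have hNmV : ∀ m, Nm m ∈ V := fun m => Submodule.subset_span ⟨Bm m, hBmG m, rfl⟩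
  have hNmv : ∀ m, ∀ w : Fin n → ℂ, (Nm m).mulVec w = (Bm m).mulVec w - μm m • w := by
    intro m w
    show (Bm m - μm m • 1).mulVec w = _
    rw [Matrix.sub_mulVec, Matrix.smul_mulVec, Matrix.one_mulVec]
  set L : Fin n → ℂ := v - (v z / u z) • u with hL
  have hNlim : Tendsto (fun m => (Nm m).mulVec (um m)) atTop (𝓝 L) := by
    have h1 : ∀ m, (Nm m).mulVec (um m) = (Bm m).mulVec (um m) - μm m • um m :=
      fun m => hNmv m _
    exact Tendsto.congr (fun m => (h1 m).symm) (hlim.sub (hμlim.smul humlim))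
  set ν : ℕ → ℝ := fun m => ∑ i, ∑ j, ‖Nm m i j‖ with hνdef
  have hν0 : ∀ m, 0 ≤ ν m :=
    fun m => Finset.sum_nonneg fun i _ => Finset.sum_nonneg fun j _ => norm_nonneg _
  have hrow_le_ν : ∀ m (i : Fin n), (∑ j, ‖Nm m i j‖) ≤ ν m := fun m i =>
    Finset.single_le_sum (f := fun i' => ∑ j', ‖Nm m i' j'‖)
      (fun _ _ => Finset.sum_nonneg fun _ _ => norm_nonneg _) (Finset.mem_univ i)
  have hentry_le_ν : ∀ m (i j : Fin n), ‖Nm m i j‖ ≤ ν m := by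
    intro m i j
    refine le_trans ?_ (hrow_le_ν m i)
    exact Finset.single_le_sum (f := fun j' => ‖Nm m i j'‖)
      (fun _ _ => norm_nonneg _) (Finset.mem_univ j)
  have hb1 : ∀ m, ∀ w : Fin n → ℂ, ‖(Nm m).mulVec w‖ ≤ ν m * ‖w‖ := by
    intro m w
    rw [pi_norm_le_iff_of_nonneg (mul_nonneg (hν0 m) (norm_nonneg w))]
    intro i
    have h1 : (Nm m).mulVec w i = ∑ j, Nm m i j * w j := rfl
    rw [h1]
    calc ‖∑ j, Nm m i j * w j‖ ≤ ∑ j, ‖Nm m i j * w j‖ := norm_sum_le _ _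
      _ = ∑ j, ‖Nm m i j‖ * ‖w j‖ := by simp [norm_mul]
      _ ≤ ∑ j, ‖Nm m i j‖ * ‖w‖ := Finset.sum_le_sum fun j _ =>
          mul_le_mul_of_nonneg_left (norm_le_pi_norm w j) (norm_nonneg _)
      _ = (∑ j, ‖Nm m i j‖) * ‖w‖ := (Finset.sum_mul _ _ _).symm
      _ ≤ ν m * ‖w‖ := mul_le_mul_of_nonneg_right (hrow_le_ν m i) (norm_nonneg w)
  have hb2 : ∀ m, ν m ≤ c' * ‖(Nm m).mulVec u‖ := by
    intro m
    have hGN : ∀ i j : Fin n, Nm m i j = G' ((Nm m).mulVec u) i j := by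
      intro i j
      rw [hG' (Nm m) (hNmV m)]
    calc ν m = ∑ i, ∑ j, ‖Nm m i j‖ := rfl
      _ = ∑ p : Fin n × Fin n, ‖Nm m p.1 p.2‖ := by
          rw [← Finset.sum_product', Finset.univ_product_univ]
      _ ≤ ∑ p : Fin n × Fin n, cc p * ‖(Nm m).mulVec u‖ := by
          refine Finset.sum_le_sum fun p _ => ?_
          rw [hGN p.1 p.2]
          exact hccb p _
      _ = c' * ‖(Nm m).mulVec u‖ := by rw [hc', Finset.sum_mul]
  have hsplit : ∀ m, ‖(Nm m).mulVec u‖ ≤ ‖(Nm m).mulVec (um m)‖ + ν m * ‖u - um m‖ := by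
    intro m
    have h1 : (Nm m).mulVec u = (Nm m).mulVec (um m) + (Nm m).mulVec (u - um m) := by
      rw [Matrix.mulVec_sub]
      abel
    rw [h1]
    exact (norm_add_le _ _).trans (add_le_add (le_refl _) (hb1 m _))
  have hδlim : Tendsto (fun m => ‖u - um m‖) atTop (𝓝 0) := by
    have h1 : Tendsto (fun m => u - um m) atTop (𝓝 (u - u)) := tendsto_const_nhds.sub humlim
    rw [sub_self] at h1
    simpa using h1.norm
  have hev1 : ∀ᶠ m in atTop, ‖u - um m‖ ≤ 1 / (2 * (c' + 1)) := by
    have hpos : (0:ℝ) < 1 / (2 * (c' + 1)) := by positivity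
    exact (hδlim.eventually_lt_const hpos).mono fun m h => le_of_lt h
  have hev2 : ∀ᶠ m in atTop, ‖(Nm m).mulVec (um m)‖ ≤ ‖L‖ + 1 := by
    have h1 : ‖L‖ < ‖L‖ + 1 := by linarith
    exact (hNlim.norm.eventually_lt_const h1).mono fun m h => le_of_lt h
  have hev3 : ∀ᶠ m in atTop, ‖μm m‖ ≤ ‖v z / u z‖ + 1 := by
    have h1 : ‖v z / u z‖ < ‖v z / u z‖ + 1 := by linarith
    exact (hμlim.norm.eventually_lt_const h1).mono fun m h => le_of_lt h
  set D : ℝ := 2 * c' * (‖L‖ + 1) + (‖v z / u z‖ + 1) with hD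
  have hev : ∀ᶠ m in atTop, ∀ i j : Fin n, ‖Bm m i j‖ ≤ D := by
    filter_upwards [hev1, hev2, hev3] with m h1 h2 h3
    have k3 : ν m * ‖u - um m‖ ≤ ν m * (1 / (2 * (c' + 1))) :=
      mul_le_mul_of_nonneg_left h1 (hν0 m)
    have k5 : ν m ≤ c' * (‖L‖ + 1 + ν m * (1 / (2 * (c' + 1)))) := by
      calc ν m ≤ c' * ‖(Nm m).mulVec u‖ := hb2 m
        _ ≤ c' * (‖(Nm m).mulVec (um m)‖ + ν m * ‖u - um m‖) :=
            mul_le_mul_of_nonneg_left (hsplit m) hc'0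
        _ ≤ c' * (‖L‖ + 1 + ν m * (1 / (2 * (c' + 1)))) :=
            mul_le_mul_of_nonneg_left (add_le_add h2 k3) hc'0
    have k6 : c' * (ν m * (1 / (2 * (c' + 1)))) ≤ ν m / 2 := by
      have h7 : c' * (1 / (2 * (c' + 1))) ≤ 1 / 2 := by
        rw [mul_one_div, div_le_div_iff₀ (by positivity) (by norm_num)]
        linarith
      calc c' * (ν m * (1 / (2 * (c' + 1)))) = c' * (1 / (2 * (c' + 1))) * ν m := by ring
        _ ≤ 1 / 2 * ν m := mul_le_mul_of_nonneg_right h7 (hν0 m)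
        _ = ν m / 2 := by ring
    have hν2 : ν m ≤ 2 * c' * (‖L‖ + 1) := by
      have k7 : ν m ≤ c' * (‖L‖ + 1) + c' * (ν m * (1 / (2 * (c' + 1)))) := by
        calc ν m ≤ c' * (‖L‖ + 1 + ν m * (1 / (2 * (c' + 1)))) := k5
          _ = c' * (‖L‖ + 1) + c' * (ν m * (1 / (2 * (c' + 1)))) := by ring
      linarith
    intro i j
    have hBij : Bm m i j = Nm m i j + μm m * (1 : Matrix (Fin n) (Fin n) ℂ) i j := by
      show Bm m i j = (Bm m - μm m • 1) i j + _
      simp [Matrix.sub_apply, Matrix.smul_apply]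
    have h1ij : ‖(1 : Matrix (Fin n) (Fin n) ℂ) i j‖ ≤ 1 := by
      rcases eq_or_ne i j with h | h
      · rw [h, Matrix.one_apply_eq]; simp
      · rw [Matrix.one_apply_ne h]; simp
    calc ‖Bm m i j‖ ≤ ‖Nm m i j‖ + ‖μm m * (1 : Matrix (Fin n) (Fin n) ℂ) i j‖ := by
          rw [hBij]; exact norm_add_le _ _
      _ ≤ ν m + ‖μm m‖ * 1 := add_le_add (hentry_le_ν m i j)
          (by rw [norm_mul]; exact mul_le_mul_of_nonneg_left h1ij (norm_nonneg _))
      _ ≤ D := by rw [hD, mul_one]; linarith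
  have hfev : ∀ᶠ m in atTop, (∑ i, ∑ j, ‖Bm m i j‖) ≤ (n : ℝ) * ((n : ℝ) * D) := by
    filter_upwards [hev] with m hm
    calc ∑ i, ∑ j, ‖Bm m i j‖ ≤ ∑ _i : Fin n, ∑ _j : Fin n, D :=
          Finset.sum_le_sum fun i _ => Finset.sum_le_sum fun j _ => hm i j
      _ = (n : ℝ) * ((n : ℝ) * D) := by
          simp [Finset.sum_const, Finset.card_univ, nsmul_eq_mul]
  obtain ⟨C, hC⟩ := glob hfev
  refine ⟨C, fun m i j => ?_⟩
  have h1 : ‖Bm m i j‖ ≤ ∑ i', ∑ j', ‖Bm m i' j'‖ := by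
    refine le_trans (Finset.single_le_sum (f := fun j' => ‖Bm m i j'‖)
      (fun _ _ => norm_nonneg _) (Finset.mem_univ j)) ?_
    exact Finset.single_le_sum (f := fun i' => ∑ j', ‖Bm m i' j'‖)
      (fun _ _ => Finset.sum_nonneg fun _ _ => norm_nonneg _) (Finset.mem_univ i)
  exact h1.trans (hC m)
end

section
/- Let G be an abelian sub-semigroup of K_{η,r}(ℂ) such that rank(F_{G_k}) = n_k − 1 for each k = 1,…,r. Let x, y ∈ U = ∏_{k=1}^r (ℂ* × ℂ^{n_k−1}). If there exist sequences (x_m) in ℂⁿ with x_m → x and (B_m) in G with B_m x_m → y, then (B_m) is bounded. -/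
open Filter Topology Matrix

/-- the flag subspaces: vectors whose first `t` coordinates vanish. -/
noncomputable def Vt (n t : ℕ) : Submodule ℂ (Fin n → ℂ) where
  carrier := {v | ∀ j : Fin n, (j : ℕ) < t → v j = 0}
  add_mem' := by intro a b ha hb j hj; simp [Pi.add_apply, ha j hj, hb j hj]
  zero_mem' := by intro j hj; rfl
  smul_mem' := by intro c a ha j hj; simp [Pi.smul_apply, ha j hj]

lemma mem_Vt {n t : ℕ} {v : Fin n → ℂ} : v ∈ Vt n t ↔ ∀ j : Fin n, (j : ℕ) < t → v j = 0 :=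
  Iff.rfl

/-- entries of `B - B i i • 1` on or above the diagonal vanish for `B` in `T_n`. -/
lemma subDiag_zero {n : ℕ} {B : Matrix (Fin n) (Fin n) ℂ} (hB : IsTn B) (i j l : Fin n)
    (h : (j : ℕ) ≤ (l : ℕ)) : (B - B i i • (1 : Matrix (Fin n) (Fin n) ℂ)) j l = 0 := by
  rcases eq_or_ne j l with rfl | hne
  · simp [Matrix.sub_apply, Matrix.smul_apply, Matrix.one_apply_eq, hB.2 j i]
  · have hlt : j < l := by
      rw [Fin.lt_def]
      exact lt_of_le_of_ne h (fun hh => hne (Fin.ext hh))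
    simp [Matrix.sub_apply, Matrix.smul_apply, Matrix.one_apply_ne hne, hB.1 j l hlt]

lemma key_s9 {n : ℕ} (hn : 0 < n) (G : Set (Matrix (Fin n) (Fin n) ℂ))
    (hT : ∀ B ∈ G, IsTn B)
    (hrank : Module.finrank ℂ (FG G) = n - 1)
    (x : Fin n → ℂ) (hx : x ⟨0, hn⟩ ≠ 0)
    (M : Matrix (Fin n) (Fin n) ℂ) (hMT : IsTn M)
    (hMc : ∀ C ∈ G, M * C = C * M)
    (hMx : M.mulVec x = 0) : M = 0 := by
  set i0 : Fin n := ⟨0, hn⟩ with hi0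
  have hval0 : (i0 : ℕ) = 0 := rfl
  have hj0 : ∀ j : Fin n, (j : ℕ) < 1 → j = i0 := fun j hj => Fin.ext (by omega)
  -- the diagonal of M vanishes
  have hrow0 : ∀ (A : Matrix (Fin n) (Fin n) ℂ), IsTn A → ∀ v, (A.mulVec v) i0 = A i0 i0 * v i0 := by
    intro A hA v
    have hz : ∀ j : Fin n, j ≠ i0 → A i0 j * v j = 0 := by
      intro j hj
      have hne : (j : ℕ) ≠ 0 := fun h => hj (Fin.ext (by omega))
      have : i0 < j := by rw [Fin.lt_def]; omega
      rw [hA.1 i0 j this, zero_mul]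
    calc (A.mulVec v) i0 = ∑ j, A i0 j * v j := rfl
      _ = A i0 i0 * v i0 := Finset.sum_eq_single i0 (fun j _ hj => hz j hj) (by simp)
  have hdiag0 : M i0 i0 = 0 := by
    have h0 : (M.mulVec x) i0 = 0 := by rw [hMx]; rfl
    rw [hrow0 M hMT x] at h0
    exact (mul_eq_zero.1 h0).resolve_right hx
  -- FG G = Vt n 1
  have hVt1 : Vt n 1 = LinearMap.ker (LinearMap.proj (R := ℂ) (φ := fun _ : Fin n => ℂ) i0) := by
    ext v
    constructor
    · intro hv; exact hv i0 (by omega)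
    · intro hv j hj; rw [hj0 j hj]; exact hv
  have hV1rank : Module.finrank ℂ (Vt n 1) = n - 1 := by
    rw [hVt1]
    have hsurj : Function.Surjective (LinearMap.proj (R := ℂ) (φ := fun _ : Fin n => ℂ) i0) := by
      intro c; exact ⟨Pi.single i0 c, by simp⟩
    have := LinearMap.finrank_range_add_finrank_ker
      (LinearMap.proj (R := ℂ) (φ := fun _ : Fin n => ℂ) i0)
    rw [LinearMap.range_eq_top.2 hsurj, finrank_top] at this
    simp only [Module.finrank_pi, Fintype.card_fin, Module.finrank_self] at this
    omega
  have hFG_le : FG G ≤ Vt n 1 := by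
    rw [FG]
    apply Submodule.span_le.2
    rintro v ⟨B, hB, i, hi, rfl⟩
    intro j hj
    rw [mulVec_single]
    have hle : (j : ℕ) ≤ (i : ℕ) := by omega
    show (B - B i i • 1) j i * 1 = 0
    rw [subDiag_zero (hT B hB) i j i hle, zero_mul]
  have hFG : FG G = Vt n 1 :=
    Submodule.eq_of_le_of_finrank_eq hFG_le (by rw [hrank, hV1rank])
  -- range of M and the shifted span
  set R : Submodule ℂ (Fin n → ℂ) := LinearMap.range M.mulVecLin with hR
  set T : Submodule ℂ (Fin n → ℂ) := Submodule.span ℂ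
    {w | ∃ C ∈ G, ∃ u ∈ R, w = (C - C i0 i0 • (1 : Matrix (Fin n) (Fin n) ℂ)).mulVec u} with hTdef
  have hcomm' : ∀ C ∈ G, ∀ v, M.mulVec ((C - C i0 i0 • 1).mulVec v)
      = (C - C i0 i0 • 1).mulVec (M.mulVec v) := by
    intro C hC v
    rw [mulVec_mulVec, mulVec_mulVec]
    congr 1
    have h1 : M * (C i0 i0 • 1) = (C i0 i0 • 1) * M := by
      rw [Matrix.mul_smul, Matrix.smul_mul, mul_one, one_mul]
    rw [Matrix.mul_sub, Matrix.sub_mul, hMc C hC, h1]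
  -- image of FG under M lands in T
  have himg : ∀ w ∈ FG G, M.mulVec w ∈ T := by
    intro w hw
    rw [FG] at hw
    induction hw using Submodule.span_induction with
    | mem v hv =>
      obtain ⟨B, hB, i, hi, rfl⟩ := hv
      rw [(hT B hB).2 i i0, hcomm' B hB]
      exact Submodule.subset_span
        ⟨B, hB, M.mulVec (Pi.single i 1), ⟨Pi.single i 1, rfl⟩, rfl⟩
    | zero => rw [Matrix.mulVec_zero]; exact T.zero_mem
    | add a b _ _ ha hb => rw [Matrix.mulVec_add]; exact T.add_mem ha hb
    | smul c a _ ha => rw [Matrix.mulVec_smul]; exact T.smul_mem c ha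
  -- R ≤ T
  have hrest : ∀ v : Fin n → ℂ, (v - v i0 • (Pi.single i0 1 : Fin n → ℂ)) ∈ FG G := by
    intro v
    rw [hFG]
    intro j hj
    rw [hj0 j hj]
    simp
  have he0 : M.mulVec (Pi.single i0 1 : Fin n → ℂ) ∈ T := by
    have h1 : M.mulVec (x - x i0 • (Pi.single i0 1 : Fin n → ℂ)) ∈ T := himg _ (hrest x)
    rw [Matrix.mulVec_sub, hMx, Matrix.mulVec_smul, zero_sub] at h1
    have h2 : M.mulVec (Pi.single i0 1 : Fin n → ℂ)
        = (-(x i0))⁻¹ • (-(x i0 • M.mulVec (Pi.single i0 1 : Fin n → ℂ))) := by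
      rw [← neg_smul, smul_smul, inv_mul_cancel₀ (neg_ne_zero.2 hx), one_smul]
    rw [h2]
    exact T.smul_mem _ h1
  have hRT : R ≤ T := by
    rintro _ ⟨v, rfl⟩
    have hdecomp : (v : Fin n → ℂ)
        = v i0 • (Pi.single i0 1 : Fin n → ℂ) + (v - v i0 • (Pi.single i0 1 : Fin n → ℂ)) := by
      abel
    rw [Matrix.mulVecLin_apply, hdecomp, Matrix.mulVec_add, Matrix.mulVec_smul]
    exact T.add_mem (T.smul_mem _ he0) (himg _ (hrest v))
  -- shifting
  have hshift : ∀ t : ℕ, R ≤ Vt n t → T ≤ Vt n (t + 1) := by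
    intro t hRV
    apply Submodule.span_le.2
    rintro w ⟨C, hC, u, hu, rfl⟩
    intro j hj
    have hu' := hRV hu
    calc ((C - C i0 i0 • 1).mulVec u) j = ∑ l, (C - C i0 i0 • 1) j l * u l := rfl
      _ = 0 := by
        apply Finset.sum_eq_zero
        intro l _
        rcases lt_or_ge (l : ℕ) t with hl | hl
        · rw [hu' l hl, mul_zero]
        · rw [subDiag_zero (hT C hC) i0 j l (by omega), zero_mul]
  have hind : ∀ t : ℕ, R ≤ Vt n t := by
    intro t
    induction t with
    | zero => intro v _ j hj; omega
    | succ t ih => exact le_trans hRT (hshift t ih)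
  -- conclude
  ext i j
  have h := hind n ⟨Pi.single j 1, rfl⟩ i i.isLt
  rw [Matrix.mulVecLin_apply, mulVec_single] at h
  simpa using h

attribute [local instance] Matrix.normedAddCommGroup Matrix.normedSpace

lemma mulVec_norm_le {n : ℕ} (M : Matrix (Fin n) (Fin n) ℂ) (v : Fin n → ℂ) :
    ‖M.mulVec v‖ ≤ (n : ℝ) * ‖M‖ * ‖v‖ := by
  have h0 : (0:ℝ) ≤ (n : ℝ) * ‖M‖ * ‖v‖ := by positivity
  rw [pi_norm_le_iff_of_nonneg h0]
  intro i
  calc ‖∑ j, M i j * v j‖ ≤ ∑ j, ‖M i j * v j‖ := norm_sum_le _ _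
    _ ≤ ∑ _j : Fin n, ‖M‖ * ‖v‖ := by
        apply Finset.sum_le_sum
        intro j _
        rw [norm_mul]
        exact mul_le_mul (Matrix.norm_entry_le_entrywise_sup_norm M)
          (norm_le_pi_norm v j) (norm_nonneg _) (norm_nonneg _)
    _ = (n : ℝ) * ‖M‖ * ‖v‖ := by
        rw [Finset.sum_const, Finset.card_univ, Fintype.card_fin, nsmul_eq_mul, mul_assoc]

lemma bound_of_eventually {f : ℕ → ℝ} (m0 : ℕ) (a : ℝ) (h : ∀ m, m0 ≤ m → f m ≤ a) :
    ∃ C, ∀ m, f m ≤ C := by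
  refine ⟨max a 0 + ∑ i ∈ Finset.range m0, |f i|, fun m => ?_⟩
  rcases lt_or_ge m m0 with hm | hm
  · calc f m ≤ |f m| := le_abs_self _
      _ ≤ ∑ i ∈ Finset.range m0, |f i| :=
        Finset.single_le_sum (fun i _ => abs_nonneg (f i)) (Finset.mem_range.2 hm)
      _ ≤ max a 0 + ∑ i ∈ Finset.range m0, |f i| := by
        nlinarith [le_max_right a (0:ℝ)]
  · calc f m ≤ a := h m hm
      _ ≤ max a 0 + ∑ i ∈ Finset.range m0, |f i| := by
        have : (0:ℝ) ≤ ∑ i ∈ Finset.range m0, |f i| :=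
          Finset.sum_nonneg (fun i _ => abs_nonneg (f i))
        nlinarith [le_max_left a (0:ℝ)]

lemma blockBound {n : ℕ} (hn : 0 < n) (G : Set (Matrix (Fin n) (Fin n) ℂ))
    (hT : ∀ B ∈ G, IsTn B)
    (hrank : Module.finrank ℂ (FG G) = n - 1)
    (x y : Fin n → ℂ) (hx : x ⟨0, hn⟩ ≠ 0)
    (xm : ℕ → Fin n → ℂ) (hxm : Tendsto xm atTop (𝓝 x))
    (Bm : ℕ → Matrix (Fin n) (Fin n) ℂ)
    (hBmT : ∀ m, IsTn (Bm m)) (hBmc : ∀ m, ∀ C ∈ G, Bm m * C = C * Bm m)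
    (hlim : Tendsto (fun m => (Bm m).mulVec (xm m)) atTop (𝓝 y)) :
    ∃ C, ∀ m, ‖Bm m‖ ≤ C := by
  classical
  -- the subspace of triangular matrices commuting with G
  set A : Submodule ℂ (Matrix (Fin n) (Fin n) ℂ) :=
    { carrier := {M | IsTn M ∧ ∀ C ∈ G, M * C = C * M}
      add_mem' := by
        rintro a b ⟨⟨ha1, ha2⟩, ha3⟩ ⟨⟨hb1, hb2⟩, hb3⟩
        refine ⟨⟨fun i j hij => ?_, fun i j => ?_⟩, fun C hC => ?_⟩
        · simp [Matrix.add_apply, ha1 i j hij, hb1 i j hij]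
        · simp [Matrix.add_apply, ha2 i j, hb2 i j]
        · rw [Matrix.add_mul, Matrix.mul_add, ha3 C hC, hb3 C hC]
      zero_mem' := by
        refine ⟨⟨fun i j _ => rfl, fun i j => rfl⟩, fun C hC => by rw [Matrix.zero_mul, Matrix.mul_zero]⟩
      smul_mem' := by
        rintro c a ⟨⟨ha1, ha2⟩, ha3⟩
        refine ⟨⟨fun i j hij => ?_, fun i j => ?_⟩, fun C hC => ?_⟩
        · simp [Matrix.smul_apply, ha1 i j hij]
        · simp [Matrix.smul_apply, ha2 i j]
        · rw [Matrix.smul_mul, Matrix.mul_smul, ha3 C hC] } with hA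
  have hBmA : ∀ m, Bm m ∈ A := fun m => ⟨hBmT m, hBmc m⟩
  -- the injective evaluation map
  set φ : A →ₗ[ℂ] (Fin n → ℂ) :=
    { toFun := fun M => (M : Matrix (Fin n) (Fin n) ℂ).mulVec x
      map_add' := by intro a b; exact Matrix.add_mulVec _ _ _
      map_smul' := by
        intro c a
        show ((c • a : A) : Matrix (Fin n) (Fin n) ℂ).mulVec x
          = c • ((a : Matrix (Fin n) (Fin n) ℂ).mulVec x)
        rw [Submodule.coe_smul]
        exact Matrix.smul_mulVec c _ x } with hphi
  have hinj : Function.Injective φ := by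
    rw [← LinearMap.ker_eq_bot, eq_bot_iff]
    rintro M hM
    have h0 : (M : Matrix (Fin n) (Fin n) ℂ).mulVec x = 0 := hM
    have : (M : Matrix (Fin n) (Fin n) ℂ) = 0 :=
      key_s9 hn G hT hrank x hx _ M.2.1 M.2.2 h0
    simpa [Submodule.mem_bot] using Subtype.ext this
  -- bounded inverse
  obtain ⟨c, hcpos, hbd⟩ : ∃ c : ℝ, 0 < c ∧ ∀ M : A,
      ‖(M : Matrix (Fin n) (Fin n) ℂ)‖ ≤ c * ‖(M : Matrix (Fin n) (Fin n) ℂ).mulVec x‖ := by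
    set e := LinearEquiv.ofInjective φ hinj with he
    letI : TopologicalSpace A := PseudoMetricSpace.toUniformSpace.toTopologicalSpace
    set g := LinearMap.toContinuousLinearMap (e.symm.toLinearMap) with hg
    refine ⟨‖g‖ + 1, by positivity, ?_⟩
    intro M
    have h1 : M = g (e M) := (e.symm_apply_apply M).symm
    have h2 : ‖e M‖ = ‖(M : Matrix (Fin n) (Fin n) ℂ).mulVec x‖ := by
      have h3 : ((e M : Fin n → ℂ)) = φ M := LinearEquiv.ofInjective_apply φ M
      calc ‖e M‖ = ‖(e M : Fin n → ℂ)‖ := rfl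
        _ = ‖φ M‖ := by rw [h3]
        _ = ‖(M : Matrix (Fin n) (Fin n) ℂ).mulVec x‖ := rfl
    calc ‖(M : Matrix (Fin n) (Fin n) ℂ)‖ = ‖M‖ := rfl
      _ = ‖g (e M)‖ := by rw [← h1]
      _ ≤ ‖g‖ * ‖e M‖ := g.le_opNorm _
      _ ≤ (‖g‖ + 1) * ‖(M : Matrix (Fin n) (Fin n) ℂ).mulVec x‖ := by
          rw [h2]
          exact mul_le_mul_of_nonneg_right (by linarith) (norm_nonneg _)
  -- eventual bounds
  have hD : ∀ᶠ m in atTop, ‖(Bm m).mulVec (xm m)‖ ≤ ‖y‖ + 1 := by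
    have := hlim.norm.eventually (eventually_le_nhds (lt_add_one ‖y‖))
    exact this
  have hn' : (0:ℝ) < (n:ℝ) := by exact_mod_cast hn
  obtain ⟨ε, hεpos, hhalfgen⟩ : ∃ ε : ℝ, 0 < ε ∧ ∀ B : ℝ,
      c * ((n : ℝ) * B * ε) = B / 2 := by
    refine ⟨(2 * c * (n:ℝ))⁻¹, by positivity, ?_⟩
    intro B
    field_simp
  have hxm' : ∀ᶠ m in atTop, ‖xm m - x‖ < ε := by
    have := Metric.tendsto_atTop.1 hxm ε hεpos
    obtain ⟨N, hN⟩ := this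
    exact eventually_atTop.2 ⟨N, fun m hm => by rw [← dist_eq_norm]; exact hN m hm⟩
  obtain ⟨m0, hm0⟩ := eventually_atTop.1 (hD.and hxm')
  apply bound_of_eventually m0 (2 * c * (‖y‖ + 1))
  intro m hm
  obtain ⟨hD', hx'⟩ := hm0 m hm
  set Mm := Bm m with hMm
  clear_value Mm
  have key1 : ‖Mm‖ ≤ c * ‖Mm.mulVec x‖ := hbd ⟨Mm, by rw [hMm]; exact hBmA m⟩
  have key2 : ‖Mm.mulVec x‖ ≤ ‖Mm.mulVec (xm m)‖ + ‖Mm.mulVec (xm m - x)‖ := by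
    have : Mm.mulVec x = Mm.mulVec (xm m) - Mm.mulVec (xm m - x) := by
      rw [Matrix.mulVec_sub]; abel
    rw [this]
    exact norm_sub_le _ _
  have key3 : ‖Mm.mulVec (xm m - x)‖ ≤ (n : ℝ) * ‖Mm‖ * ε :=
    le_trans (mulVec_norm_le _ _)
      (by
        apply mul_le_mul_of_nonneg_left (le_of_lt hx')
        positivity)
  have hchain : ‖Mm‖ ≤ c * (‖y‖ + 1) + c * ((n : ℝ) * ‖Mm‖ * ε) := by
    calc ‖Mm‖ ≤ c * ‖Mm.mulVec x‖ := key1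
      _ ≤ c * (‖Mm.mulVec (xm m)‖ + ‖Mm.mulVec (xm m - x)‖) :=
          mul_le_mul_of_nonneg_left key2 (le_of_lt hcpos)
      _ ≤ c * (‖y‖ + 1) + c * ((n : ℝ) * ‖Mm‖ * ε) := by
          rw [mul_add]
          exact add_le_add (mul_le_mul_of_nonneg_left hD' (le_of_lt hcpos))
            (mul_le_mul_of_nonneg_left key3 (le_of_lt hcpos))
  have hhalf : c * ((n : ℝ) * ‖Mm‖ * ε) ≤ ‖Mm‖ / 2 := (hhalfgen ‖Mm‖).le
  linarith [hchain, hhalf]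

set_option maxHeartbeats 1000000 in
/-- If `rank F_{G_k} = n_k - 1` for each block and `x_m → x ∈ U`, `B_m x_m → y ∈ U`
with `B_m ∈ G`, then `(B_m)` is bounded. -/
theorem stmt9 (r : ℕ) (nn : Fin r → ℕ) (hpos : ∀ k, 0 < nn k)
    (G : Set ((k : Fin r) → Matrix (Fin (nn k)) (Fin (nn k)) ℂ))
    (hT : ∀ B ∈ G, ∀ k, IsTn (B k))
    (hmul : ∀ A ∈ G, ∀ B ∈ G, (fun k => A k * B k) ∈ G)
    (hcomm : ∀ A ∈ G, ∀ B ∈ G, ∀ k, A k * B k = B k * A k)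
    (hrank : ∀ k : Fin r,
      Module.finrank ℂ (FG ((fun B => B k) '' G)) = nn k - 1)
    (x y : (k : Fin r) → Fin (nn k) → ℂ)
    (hx : ∀ k, x k ⟨0, hpos k⟩ ≠ 0) (hy : ∀ k, y k ⟨0, hpos k⟩ ≠ 0)
    (xm : ℕ → (k : Fin r) → Fin (nn k) → ℂ)
    (hxm : Tendsto xm atTop (𝓝 x))
    (Bm : ℕ → (k : Fin r) → Matrix (Fin (nn k)) (Fin (nn k)) ℂ)
    (hBmG : ∀ m, Bm m ∈ G)
    (hlim : Tendsto (fun m k => (Bm m k).mulVec (xm m k)) atTop (𝓝 y)) :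
    ∃ C, ∀ m k, ∀ i j : Fin (nn k), ‖Bm m k i j‖ ≤ C := by
  have hblock : ∀ k : Fin r, ∃ C, ∀ m, ‖Bm m k‖ ≤ C := by
    intro k
    have h1 : ∀ B' ∈ ((fun B => B k) '' G), IsTn B' := by
      rintro B' ⟨B, hB, rfl⟩; exact hT B hB k
    have h2 : Tendsto (fun m => xm m k) atTop (𝓝 (x k)) := tendsto_pi_nhds.1 hxm k
    have h3 : Tendsto (fun m => (Bm m k).mulVec (xm m k)) atTop (𝓝 (y k)) :=
      tendsto_pi_nhds.1 hlim k
    have h4 : ∀ m, ∀ C ∈ ((fun B => B k) '' G), Bm m k * C = C * Bm m k := by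
      rintro m C' ⟨C, hC, rfl⟩; exact hcomm (Bm m) (hBmG m) C hC k
    have h5 : ∀ m, IsTn (Bm m k) := fun m => hT (Bm m) (hBmG m) k
    exact blockBound (hpos k) _ h1 (hrank k) _ _ (hx k) _ h2 _ h5 h4 h3
  choose Ck hCk using hblock
  refine ⟨∑ k, max (Ck k) 0, ?_⟩
  intro m k i j
  calc ‖Bm m k i j‖ ≤ ‖Bm m k‖ := Matrix.norm_entry_le_entrywise_sup_norm _
    _ ≤ Ck k := hCk k m
    _ ≤ max (Ck k) 0 := le_max_left _ _
    _ ≤ ∑ k, max (Ck k) 0 :=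
        Finset.single_le_sum (fun k _ => le_max_right (Ck k) 0) (Finset.mem_univ k)
end

section
/- Let G be a sub-semigroup of M_n(ℂ), u ∈ ℂⁿ, and suppose every pair of sequences (B_m) in G and (x_m) in ℂⁿ with x_m → u and B_m x_m convergent forces (B_m) to be bounded. If for every y in a dense subset D of ℂⁿ there exist such sequences with x_m → u and B_m x_m → y, then the orbit G(u) = {A u : A ∈ G} is dense in ℂⁿ. -/
open Filter Topology Matrix

/-- Key estimate step: if every sequence `B_m ∈ G`, `x_m → u` with `B_m x_m` convergent is
bounded, and every `y` in a dense set `D` arises as such a limit, then `G(u)` is dense. -/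
theorem stmt10 (n : ℕ) (G : Set (Matrix (Fin n) (Fin n) ℂ))
    (hmul : ∀ A ∈ G, ∀ B ∈ G, A * B ∈ G)
    (u : Fin n → ℂ)
    (hbdd : ∀ (Bm : ℕ → Matrix (Fin n) (Fin n) ℂ) (xm : ℕ → Fin n → ℂ),
      (∀ m, Bm m ∈ G) → Tendsto xm atTop (𝓝 u) →
      (∃ L, Tendsto (fun m => (Bm m).mulVec (xm m)) atTop (𝓝 L)) →
      ∃ C, ∀ m, ∀ i j : Fin n, ‖Bm m i j‖ ≤ C)
    (D : Set (Fin n → ℂ)) (hD : Dense D)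
    (happ : ∀ y ∈ D, ∃ (Bm : ℕ → Matrix (Fin n) (Fin n) ℂ) (xm : ℕ → Fin n → ℂ),
      (∀ m, Bm m ∈ G) ∧ Tendsto xm atTop (𝓝 u) ∧
      Tendsto (fun m => (Bm m).mulVec (xm m)) atTop (𝓝 y)) :
    Dense {w : Fin n → ℂ | ∃ A ∈ G, w = A.mulVec u} := by
  have key : D ⊆ closure {w : Fin n → ℂ | ∃ A ∈ G, w = A.mulVec u} := by
    intro y hy
    obtain ⟨Bm, xm, hBm, hxm, hBx⟩ := happ y hy
    obtain ⟨C, hC⟩ := hbdd Bm xm hBm hxm ⟨y, hBx⟩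
    have h0 : Tendsto (fun m => (Bm m).mulVec u - (Bm m).mulVec (xm m)) atTop (𝓝 0) := by
      rw [tendsto_pi_nhds]
      intro i
      have heq : ∀ m, ((Bm m).mulVec u - (Bm m).mulVec (xm m)) i
          = ∑ j, Bm m i j * (u j - xm m j) := by
        intro m
        simp [Matrix.mulVec, dotProduct, mul_sub, Finset.sum_sub_distrib]
      have hsum : Tendsto (fun m => ∑ j, Bm m i j * (u j - xm m j)) atTop (𝓝 0) := by
        have : Tendsto (fun m => ∑ j, Bm m i j * (u j - xm m j)) atTop
            (𝓝 (∑ _j : Fin n, (0 : ℂ))) := by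
          apply tendsto_finset_sum
          intro j _
          have hxj : Tendsto (fun m => u j - xm m j) atTop (𝓝 0) := by
            simpa using (tendsto_pi_nhds.mp hxm j).const_sub (u j)
          apply squeeze_zero_norm (a := fun m => C * ‖u j - xm m j‖)
          · intro m
            rw [norm_mul]
            exact mul_le_mul_of_nonneg_right (hC m i j) (norm_nonneg _)
          · have : Tendsto (fun m => ‖u j - xm m j‖) atTop (𝓝 0) := by
              simpa using hxj.norm
            simpa using this.const_mul C
        simpa using this
      rw [show (0 : Fin n → ℂ) i = 0 from rfl]
      exact hsum.congr fun m => (heq m).symm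
    have htend : Tendsto (fun m => (Bm m).mulVec u) atTop (𝓝 y) := by
      have := h0.add hBx
      simpa using this
    exact mem_closure_of_tendsto htend (Eventually.of_forall fun m => ⟨Bm m, hBm m, rfl⟩)
  exact Dense.of_closure (hD.mono key)
end

section
/- For every abelian sub-semigroup G of M_n(ℂ), there exists P ∈ GL(n, ℂ), an integer r with 1 ≤ r ≤ n, and positive integers n_1,…,n_r with n_1 + ⋯ + n_r = n, such that P G P⁻¹ ⊆ T_{n_1}(ℂ) ⊕ ⋯ ⊕ T_{n_r}(ℂ). -/
open Filter Topology Matrix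

section AuxTriangularization

open Module Submodule Set

private lemma auxKerVec {V : Type} [AddCommGroup V] [Module ℂ V] (g : Module.End ℂ V)
    {x : V} (hx : x ≠ 0) {k : ℕ} (hk : (g ^ k) x = 0) : ∃ v, v ≠ 0 ∧ g v = 0 := by
  induction k generalizing x with
  | zero => simp at hk; exact absurd hk hx
  | succ k ih =>
    by_cases h : (g ^ k) x = 0
    · exact ih hx h
    · refine ⟨(g ^ k) x, h, ?_⟩
      rw [← Module.End.mul_apply, ← pow_succ']
      exact hk


private lemma auxRestrictPow {V : Type} [AddCommGroup V] [Module ℂ V]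
    (f : Module.End ℂ V) (p : Submodule ℂ V) (h : Set.MapsTo f p p) (μ : ℂ) (k : ℕ) (x : p) :
    ((((f.restrict h) - μ • (1 : Module.End ℂ p)) ^ k) x : V)
      = ((f - μ • (1 : Module.End ℂ V)) ^ k) (x : V) := by
  induction k generalizing x with
  | zero => simp
  | succ k ih =>
    rw [pow_succ', pow_succ', Module.End.mul_apply, Module.End.mul_apply, ← ih]
    generalize (((f.restrict h - μ • 1) ^ k) x) = y
    simp [LinearMap.sub_apply, LinearMap.smul_apply, LinearMap.restrict_apply]
    rfl


private lemma auxMapQPow {V : Type} [AddCommGroup V] [Module ℂ V]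
    (p : Submodule ℂ V) (f : Module.End ℂ V) (h : p ≤ p.comap f) (μ : ℂ) (k : ℕ) (x : V) :
    (((p.mapQ p f h) - μ • (1 : Module.End ℂ (V ⧸ p))) ^ k) (p.mkQ x)
      = p.mkQ (((f - μ • (1 : Module.End ℂ V)) ^ k) x) := by
  induction k generalizing x with
  | zero => simp
  | succ k ih =>
    rw [pow_succ', pow_succ', Module.End.mul_apply, Module.End.mul_apply, ih]
    generalize (((f - μ • 1) ^ k) x) = y
    simp [LinearMap.sub_apply, LinearMap.smul_apply, Submodule.mapQ_apply, map_sub]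


/-- Common eigenvector for a commuting family each having a single eigenvalue. -/
private lemma auxCommonEigenvector :
    ∀ (m : ℕ) (V : Type) [AddCommGroup V] [Module ℂ V] [FiniteDimensional ℂ V],
    Module.finrank ℂ V = m → 0 < m →
    ∀ {ι : Type} (f : ι → Module.End ℂ V), (∀ i j, Commute (f i) (f j)) →
    ∀ (μ : ι → ℂ), (∀ i, Module.End.maxGenEigenspace (f i) (μ i) = ⊤) →
    ∃ v : V, v ≠ 0 ∧ ∀ i, f i v = μ i • v := by
  intro m
  induction m using Nat.strong_induction_on with
  | _ m ih =>
  intro V _ _ _ hrank hm ι f hcomm μ hev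
  haveI : Nontrivial V := Module.nontrivial_of_finrank_pos (R := ℂ) (hrank ▸ hm)
  by_cases hall : ∀ i, f i = μ i • (1 : Module.End ℂ V)
  · obtain ⟨v, hv⟩ := exists_ne (0 : V)
    exact ⟨v, hv, fun i => by rw [hall i]; simp⟩
  · push_neg at hall
    obtain ⟨i₀, hi₀⟩ := hall
    set g : Module.End ℂ V := f i₀ - μ i₀ • 1 with hg
    -- a nonzero vector in the kernel of g
    obtain ⟨x, hx⟩ := exists_ne (0 : V)
    obtain ⟨k, hk⟩ : ∃ k : ℕ, (g ^ k) x = 0 := by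
      have := (Module.End.mem_maxGenEigenspace (f i₀) (μ i₀) x).mp
        (by rw [hev i₀]; trivial)
      exact this
    obtain ⟨v₀, hv₀, hgv₀⟩ := auxKerVec g hx hk
    set E : Submodule ℂ V := LinearMap.ker g with hE
    have hv₀E : v₀ ∈ E := hgv₀
    have hmap : ∀ i, Set.MapsTo (f i) E E := by
      intro i y hy
      have hcg : g * f i = f i * g := by
        have h1 : Commute (f i₀) (f i) := hcomm i₀ i
        have h2 : Commute ((μ i₀ : ℂ) • (1 : Module.End ℂ V)) (f i) :=
          (Commute.one_left (f i)).smul_left (μ i₀)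
        exact (h1.sub_left h2)
      have : g (f i y) = f i (g y) := by
        have := congrArg (fun h : Module.End ℂ V => h y) hcg
        simpa using this
      have hy' : g y = 0 := hy
      show f i y ∈ LinearMap.ker g
      rw [LinearMap.mem_ker, this, hy', map_zero]
    have hEtop : E ≠ ⊤ := by
      intro h
      exact hi₀ (sub_eq_zero.mp (LinearMap.ker_eq_top.mp h))
    set f' : ι → Module.End ℂ E := fun i => (f i).restrict (hmap i) with hf'
    have hcomm' : ∀ i j, Commute (f' i) (f' j) := by
      intro i j
      apply LinearMap.ext
      intro y
      apply Subtype.ext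
      have := congrArg (fun h : Module.End ℂ V => h (y : V)) (hcomm i j)
      exact this
    have hev' : ∀ i, Module.End.maxGenEigenspace (f' i) (μ i) = ⊤ := by
      intro i
      rw [eq_top_iff]
      intro y _
      rw [Module.End.mem_maxGenEigenspace]
      obtain ⟨k, hk⟩ := (Module.End.mem_maxGenEigenspace (f i) (μ i) (y : V)).mp
        (by rw [hev i]; trivial)
      refine ⟨k, Subtype.ext ?_⟩
      show (((f' i - μ i • 1) ^ k) y : V) = ((0 : E) : V)
      rw [ZeroMemClass.coe_zero]
      calc (((f' i - μ i • 1) ^ k) y : V)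
          = ((f i - μ i • 1) ^ k) (y : V) := auxRestrictPow (f i) E (hmap i) (μ i) k y
        _ = 0 := hk
    have hElt : Module.finrank ℂ E < m := hrank ▸ Submodule.finrank_lt hEtop
    haveI : Nontrivial E := nontrivial_of_ne ⟨v₀, hv₀E⟩ 0 (by simp [hv₀])
    have hEpos : 0 < Module.finrank ℂ E := Module.finrank_pos_iff.mpr ‹_›
    obtain ⟨v, hvne, hv⟩ := ih _ hElt E rfl hEpos f' hcomm' μ hev'
    refine ⟨(v : V), by simpa using hvne, fun i => ?_⟩
    have := congrArg (Subtype.val) (hv i)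
    exact this


/-- Simultaneous triangularizing basis for a commuting family, each member having a single
eigenvalue on the whole space. -/
private lemma auxTriangularBasis :
    ∀ (m : ℕ) (V : Type) [AddCommGroup V] [Module ℂ V] [FiniteDimensional ℂ V],
    Module.finrank ℂ V = m →
    ∀ {ι : Type} (f : ι → Module.End ℂ V), (∀ i j, Commute (f i) (f j)) →
    ∀ (μ : ι → ℂ), (∀ i, Module.End.maxGenEigenspace (f i) (μ i) = ⊤) →
    ∃ w : Basis (Fin m) ℂ V, ∀ i j, f i (w j) - μ i • w j ∈
      Submodule.span ℂ (w '' {j' | j' < j}) := by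
  intro m
  induction m with
  | zero =>
    intro V _ _ _ hrank ι f hcomm μ hev
    haveI : Subsingleton V := Module.finrank_zero_iff.mp hrank
    exact ⟨Basis.empty V, fun i j => j.elim0⟩
  | succ m ih =>
    intro V _ _ _ hrank ι f hcomm μ hev
    obtain ⟨v, hv, hfv⟩ := auxCommonEigenvector (m + 1) V hrank (Nat.succ_pos m) f hcomm μ hev
    set p : Submodule ℂ V := ℂ ∙ v with hp
    have hvp : v ∈ p := Submodule.mem_span_singleton_self v
    have hle : ∀ i, p ≤ p.comap (f i) := by
      intro i x hx
      obtain ⟨a, rfl⟩ := Submodule.mem_span_singleton.mp hx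
      rw [Submodule.mem_comap, _root_.map_smul, hfv i]
      exact Submodule.smul_mem _ _ (Submodule.smul_mem _ _ hvp)
    set q := V ⧸ p
    set fq : ι → Module.End ℂ q := fun i => p.mapQ p (f i) (hle i) with hfq
    have hq_mk : ∀ i x, fq i (p.mkQ x) = p.mkQ (f i x) := by
      intro i x
      rfl
    have hcommq : ∀ i j, Commute (fq i) (fq j) := by
      intro i j
      apply Submodule.linearMap_qext
      apply LinearMap.ext
      intro x
      have := congrArg (fun h : Module.End ℂ V => h x) (hcomm i j)
      simp only [Module.End.mul_apply] at this
      simp only [LinearMap.comp_apply, Module.End.mul_apply, ← Submodule.mkQ_apply, hq_mk, this]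
    have hevq : ∀ i, Module.End.maxGenEigenspace (fq i) (μ i) = ⊤ := by
      intro i
      rw [eq_top_iff]
      intro y _
      obtain ⟨x, rfl⟩ := p.mkQ_surjective y
      rw [Module.End.mem_maxGenEigenspace]
      obtain ⟨k, hk⟩ := (Module.End.mem_maxGenEigenspace (f i) (μ i) x).mp
        (by rw [hev i]; trivial)
      exact ⟨k, by rw [auxMapQPow p (f i) (hle i) (μ i) k x, hk, map_zero]⟩
    have hqrank : Module.finrank ℂ q = m := by
      have h1 : Module.finrank ℂ q + Module.finrank ℂ p = Module.finrank ℂ V :=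
        Submodule.finrank_quotient_add_finrank p
      have h2 : Module.finrank ℂ p = 1 := finrank_span_singleton hv
      omega
    obtain ⟨c, hc⟩ := ih q hqrank fq hcommq μ hevq
    obtain ⟨g, hg⟩ := p.mkQ.exists_rightInverse_of_surjective (Submodule.range_mkQ p)
    have hg' : ∀ y, p.mkQ (g y) = y := fun y => by
      have := LinearMap.congr_fun hg y
      simpa using this
    set w0 : Fin (m + 1) → V := Fin.cons v (⇑g ∘ ⇑c) with hw0
    have hli : LinearIndependent ℂ w0 := by
      rw [hw0, linearIndependent_fin_cons]
      constructor
      · apply LinearIndependent.of_comp p.mkQ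
        have : ⇑(p.mkQ) ∘ (⇑g ∘ ⇑c) = ⇑c := funext fun j => hg' (c j)
        rw [this]
        exact c.linearIndependent
      · intro hvmem
        rw [mem_span_range_iff_exists_fun] at hvmem
        obtain ⟨a, ha⟩ := hvmem
        have h0 : p.mkQ v = 0 := (Submodule.Quotient.mk_eq_zero p).mpr hvp
        have h1 : ∑ j, a j • c j = 0 := by
          have := congrArg p.mkQ ha
          simp only [map_sum, _root_.map_smul] at this
          simp only [Function.comp_apply, hg'] at this
          rw [this, h0]
        have h2 : ∀ j, a j = 0 := Fintype.linearIndependent_iff.mp c.linearIndependent a h1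
        apply hv
        rw [← ha]
        simp [h2]
    have hmemp : ∀ u : V, p.mkQ u = 0 → u ∈ p := by
      intro u hu
      exact (Submodule.Quotient.mk_eq_zero p).mp hu
    have hsp : ⊤ ≤ Submodule.span ℂ (Set.range w0) := by
      intro x _
      have hsub : x - g (p.mkQ x) ∈ p := by
        apply hmemp
        rw [map_sub, hg', sub_self]
      have hmem1 : x - g (p.mkQ x) ∈ Submodule.span ℂ (Set.range w0) := by
        obtain ⟨a, ha⟩ := Submodule.mem_span_singleton.mp hsub
        rw [← ha]
        exact Submodule.smul_mem _ _ (Submodule.subset_span ⟨0, by simp [hw0]⟩)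
      have hmem2 : g (p.mkQ x) ∈ Submodule.span ℂ (Set.range w0) := by
        have h3 : p.mkQ x ∈ Submodule.span ℂ (Set.range c) := by rw [c.span_eq]; trivial
        have h4 : g (p.mkQ x) ∈ Submodule.map g (Submodule.span ℂ (Set.range c)) :=
          Submodule.mem_map_of_mem h3
        rw [Submodule.map_span] at h4
        refine Submodule.span_mono ?_ h4
        rintro - ⟨-, ⟨j, rfl⟩, rfl⟩
        exact ⟨j.succ, by simp [hw0]⟩
      simpa using Submodule.add_mem _ hmem1 hmem2
    refine ⟨Basis.mk hli hsp, fun i j => ?_⟩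
    have hwcoe : ∀ j', (Basis.mk hli hsp) j' = w0 j' := fun j' => by rw [Basis.mk_apply]
    refine Fin.cases ?_ ?_ j
    · rw [hwcoe 0]
      have : w0 0 = v := by simp [hw0]
      rw [this, hfv i, sub_self]
      exact Submodule.zero_mem _
    · intro j₀
      have hwsucc : (Basis.mk hli hsp) j₀.succ = g (c j₀) := by
        rw [hwcoe]; simp [hw0]
      have hmky : p.mkQ (f i ((Basis.mk hli hsp) j₀.succ) - μ i • (Basis.mk hli hsp) j₀.succ)
          = fq i (c j₀) - μ i • c j₀ := by
        rw [map_sub, _root_.map_smul, hwsucc, ← hq_mk, hg']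
      set y := f i ((Basis.mk hli hsp) j₀.succ) - μ i • (Basis.mk hli hsp) j₀.succ with hy
      have hmem : p.mkQ y ∈ Submodule.span ℂ (⇑c '' {j' | j' < j₀}) := by
        rw [hmky]; exact hc i j₀
      have himg : ⇑c '' {j' | j' < j₀} = ⇑(p.mkQ) '' ((⇑g ∘ ⇑c) '' {j' | j' < j₀}) := by
        rw [← Set.image_comp]
        apply Set.image_congr
        intro j' _
        exact (hg' (c j')).symm
      rw [himg, ← Submodule.map_span] at hmem
      obtain ⟨z, hz, hzy⟩ := hmem
      have hyz : y - z ∈ p := by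
        apply hmemp
        rw [map_sub, hzy, sub_self]
      have h5 : y - z ∈ Submodule.span ℂ (⇑(Basis.mk hli hsp) '' {j' | j' < j₀.succ}) := by
        obtain ⟨a, ha⟩ := Submodule.mem_span_singleton.mp hyz
        rw [← ha]
        refine Submodule.smul_mem _ _ (Submodule.subset_span ⟨0, j₀.succ_pos, ?_⟩)
        rw [hwcoe 0]; simp [hw0]
      have h6 : z ∈ Submodule.span ℂ (⇑(Basis.mk hli hsp) '' {j' | j' < j₀.succ}) := by
        refine Submodule.span_mono ?_ hz
        rintro - ⟨j', hj', rfl⟩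
        refine ⟨j'.succ, Fin.succ_lt_succ_iff.mpr hj', ?_⟩
        rw [hwcoe]; simp [hw0]
      have h7 := Submodule.add_mem _ h5 h6
      rw [sub_add_cancel] at h7
      exact h7


end AuxTriangularization

/-- Triangularization: every abelian sub-semigroup of `M_n(ℂ)` is simultaneously conjugate
to a sub-semigroup of `T_{n_1}(ℂ) ⊕ ⋯ ⊕ T_{n_r}(ℂ)` for some `n_1 + ⋯ + n_r = n`. -/
theorem stmt12 (n : ℕ) (hn : 0 < n) (G : Set (Matrix (Fin n) (Fin n) ℂ))
    (hmul : ∀ A ∈ G, ∀ B ∈ G, A * B ∈ G)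
    (hcomm : ∀ A ∈ G, ∀ B ∈ G, A * B = B * A) :
    ∃ (P : (Matrix (Fin n) (Fin n) ℂ)ˣ) (r : ℕ), 1 ≤ r ∧ r ≤ n ∧
      ∃ (nn : Fin r → ℕ), (∀ k, 0 < nn k) ∧ (∑ k, nn k) = n ∧
        ∃ e : Fin n ≃ ((k : Fin r) × Fin (nn k)),
          ∀ B ∈ G, ∃ b : (k : Fin r) → Matrix (Fin (nn k)) (Fin (nn k)) ℂ,
            (∀ k, IsTn (b k)) ∧
            ((P : Matrix (Fin n) (Fin n) ℂ) * B * (↑P⁻¹ : Matrix (Fin n) (Fin n) ℂ)).submatrix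
                e.symm e.symm = Matrix.blockDiagonal' b := by
  classical
  haveI : Nonempty (Fin n) := ⟨⟨0, hn⟩⟩
  set ι := {B : Matrix (Fin n) (Fin n) ℂ // B ∈ G} with hι
  set f : ι → Module.End ℂ (Fin n → ℂ) := fun B => Matrix.mulVecLin B.val with hf
  have hmc : ∀ (X Y : Matrix (Fin n) (Fin n) ℂ),
      Matrix.mulVecLin X * Matrix.mulVecLin Y = Matrix.mulVecLin (X * Y) := by
    intro X Y
    rw [Matrix.mulVecLin_mul]
    rfl
  have hcommf : ∀ i j : ι, Commute (f i) (f j) := by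
    intro i j
    show f i * f j = f j * f i
    rw [hf]
    simp only
    rw [hmc, hmc, hcomm i.1 i.2 j.1 j.2]
  have htop : ⨆ χ : ι → ℂ, ⨅ i, Module.End.maxGenEigenspace (f i) (χ i) = ⊤ :=
    Module.End.iSup_iInf_maxGenEigenspace_eq_top_of_iSup_maxGenEigenspace_eq_top_of_commute f
      (fun i j _ => hcommf i j) (fun i => Module.End.iSup_maxGenEigenspace_eq_top (f i))
  have hind : iSupIndep fun χ : ι → ℂ => ⨅ i, Module.End.maxGenEigenspace (f i) (χ i) :=
    Module.End.independent_iInf_maxGenEigenspace_of_forall_mapsTo f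
      (fun i j φ => Module.End.mapsTo_maxGenEigenspace_of_comm (hcommf j i) φ)
  set W : (ι → ℂ) → Submodule ℂ (Fin n → ℂ) :=
    fun χ => ⨅ i, Module.End.maxGenEigenspace (f i) (χ i) with hW
  have hfin : {χ : ι → ℂ | W χ ≠ ⊥}.Finite := WellFoundedGT.finite_ne_bot_of_iSupIndep hind
  set s := hfin.toFinset with hs
  set r := s.card with hr
  have hs_ne : s.Nonempty := by
    by_contra hcon
    rw [Finset.not_nonempty_iff_eq_empty] at hcon
    have hallbot : ∀ χ, W χ = ⊥ := by
      intro χ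
      by_contra hχ
      have hmem : χ ∈ s := hfin.mem_toFinset.mpr hχ
      rw [hcon] at hmem
      exact absurd hmem (Finset.notMem_empty χ)
    have htb : (⊤ : Submodule ℂ (Fin n → ℂ)) = ⊥ := by
      rw [← htop]
      simp [hallbot]
    obtain ⟨x, hx⟩ := exists_ne (0 : Fin n → ℂ)
    apply hx
    have : x ∈ (⊤ : Submodule ℂ (Fin n → ℂ)) := trivial
    rw [htb] at this
    exact this
  have hrpos : 0 < r := Finset.card_pos.mpr hs_ne
  set ε : Fin r ≃ {x // x ∈ s} := s.equivFin.symm with hε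
  set N : Fin r → Submodule ℂ (Fin n → ℂ) := fun k => W (ε k).val with hN
  have hN_ne : ∀ k, N k ≠ ⊥ := fun k => hfin.mem_toFinset.mp (ε k).prop
  have hNind : iSupIndep N := hind.comp (Subtype.val_injective.comp ε.injective)
  have hNsup : ⨆ k, N k = ⊤ := by
    apply le_antisymm le_top
    rw [← htop]
    apply iSup_le
    intro χ
    by_cases hχ : W χ = ⊥
    · show W χ ≤ _
      rw [hχ]
      exact bot_le
    · have hmem : χ ∈ s := hfin.mem_toFinset.mpr hχ
      show W χ ≤ _
      have heq : W χ = N (ε.symm ⟨χ, hmem⟩) := by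
        rw [hN]
        simp only
        rw [ε.apply_symm_apply]
      rw [heq]
      exact le_iSup N _
  have hInternal : DirectSum.IsInternal N :=
    DirectSum.isInternal_submodule_of_iSupIndep_of_iSup_eq_top hNind hNsup
  have hNmem : ∀ (k) (x : Fin n → ℂ), x ∈ N k →
      ∀ j, x ∈ Module.End.maxGenEigenspace (f j) ((ε k).val j) := by
    intro k x hx j
    rw [hN] at hx
    simp only at hx
    rw [hW] at hx
    simp only [Submodule.mem_iInf] at hx
    exact hx j
  have hNmap : ∀ (i : ι) (k), Set.MapsTo (f i) (N k) (N k) := by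
    intro i k x hx
    have hx' := hNmem k x hx
    show f i x ∈ N k
    rw [hN]
    simp only
    rw [hW]
    simp only [Submodule.mem_iInf]
    intro j
    exact Module.End.mapsTo_maxGenEigenspace_of_comm (hcommf j i) _ (hx' j)
  set fr : ∀ k, ι → Module.End ℂ (N k) := fun k i => (f i).restrict (hNmap i k) with hfr
  have hcommr : ∀ k i j, Commute (fr k i) (fr k j) := by
    intro k i j
    apply LinearMap.ext
    intro y
    apply Subtype.ext
    have := congrArg (fun h : Module.End ℂ (Fin n → ℂ) => h (y : Fin n → ℂ)) (hcommf i j)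
    exact this
  have hevr : ∀ k i, Module.End.maxGenEigenspace (fr k i) ((ε k).val i) = ⊤ := by
    intro k i
    rw [eq_top_iff]
    intro y _
    rw [Module.End.mem_maxGenEigenspace]
    obtain ⟨kk, hkk⟩ := (Module.End.mem_maxGenEigenspace (f i) ((ε k).val i) (y : Fin n → ℂ)).mp
      (hNmem k _ y.prop i)
    refine ⟨kk, Subtype.ext ?_⟩
    show ((((f i).restrict (hNmap i k) - ((ε k).val i) • (1 : Module.End ℂ (N k))) ^ kk) y
        : Fin n → ℂ) = ((0 : N k) : Fin n → ℂ)
    rw [ZeroMemClass.coe_zero, auxRestrictPow (f i) (N k) (hNmap i k) ((ε k).val i) kk y]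
    exact hkk
  have hbases : ∀ k, ∃ c : Module.Basis (Fin (Module.finrank ℂ (N k))) ℂ (N k),
      ∀ i j, fr k i (c j) - (ε k).val i • c j ∈ Submodule.span ℂ (⇑c '' {j' | j' < j}) :=
    fun k => auxTriangularBasis _ (N k) rfl (fr k) (hcommr k) _ (hevr k)
  choose c hc using hbases
  set nn : Fin r → ℕ := fun k => Module.finrank ℂ (N k) with hnn
  have hnnpos : ∀ k, 0 < nn k := by
    intro k
    haveI : Nontrivial (N k) := Submodule.nontrivial_iff_ne_bot.mpr (hN_ne k)
    exact Module.finrank_pos_iff.mpr ‹_›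
  set bb : ∀ k, Module.Basis (Fin (nn k)) ℂ (N k) := fun k => (c k).reindex Fin.revPerm with hbb
  set cb := hInternal.collectedBasis bb with hcb
  have hcard : Fintype.card ((k : Fin r) × Fin (nn k)) = n := by
    have h1 := Module.finrank_eq_card_basis cb
    rw [Module.finrank_fin_fun] at h1
    exact h1.symm
  have hsum : ∑ k, nn k = n := by
    rw [← hcard]
    simp [Fintype.card_sigma]
  set e : Fin n ≃ ((k : Fin r) × Fin (nn k)) := (Fintype.equivFinOfCardEq hcard).symm with he
  have hrn : r ≤ n := by
    calc r = ∑ _k : Fin r, 1 := by simp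
    _ ≤ ∑ k, nn k := Finset.sum_le_sum (fun k _ => hnnpos k)
    _ = n := hsum
  set w3 : Module.Basis (Fin n) ℂ (Fin n → ℂ) := cb.reindex e.symm with hw3
  set bf := Pi.basisFun ℂ (Fin n) with hbf
  refine ⟨⟨w3.toMatrix bf, bf.toMatrix w3, Module.Basis.toMatrix_mul_toMatrix_flip w3 bf,
    Module.Basis.toMatrix_mul_toMatrix_flip bf w3⟩, r, hrpos, hrn, nn, hnnpos, hsum, e, ?_⟩
  intro B hB
  set i : ι := ⟨B, hB⟩ with hi
  refine ⟨fun k => LinearMap.toMatrix (bb k) (bb k) ((f i).restrict (hNmap i k)), ?_, ?_⟩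
  · -- each block is in T_{nn k}
    intro k
    have hentry : ∀ a b : Fin (nn k),
        LinearMap.toMatrix (bb k) (bb k) ((f i).restrict (hNmap i k)) a b
        = (ε k).val i * (if b.rev = a.rev then 1 else 0)
          + (c k).repr ((f i).restrict (hNmap i k) (c k b.rev)
              - (ε k).val i • c k b.rev) a.rev := by
      intro a b
      rw [LinearMap.toMatrix_apply]
      have h1 : (bb k) b = (c k) b.rev := by
        rw [hbb]; simp [Module.Basis.reindex_apply]
      have h2 : ∀ x, (bb k).repr x a = (c k).repr x a.rev := by
        intro x
        rw [hbb]
        simp [Module.Basis.repr_reindex_apply]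
      rw [h1, h2]
      have hsplit : (f i).restrict (hNmap i k) ((c k) b.rev)
          = (ε k).val i • (c k) b.rev
            + ((f i).restrict (hNmap i k) ((c k) b.rev) - (ε k).val i • (c k) b.rev) := by
        abel
      conv_lhs => rw [hsplit]
      rw [map_add, Finsupp.add_apply]
      congr 1
      rw [LinearEquiv.map_smul, Finsupp.smul_apply, Module.Basis.repr_self, Finsupp.single_apply,
        smul_eq_mul]
    constructor
    · intro a b hab
      show LinearMap.toMatrix (bb k) (bb k) ((f i).restrict (hNmap i k)) a b = 0
      rw [hentry a b]
      have hne : ¬ (b.rev = a.rev) := by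
        intro hcon
        exact absurd (Fin.rev_injective hcon) (ne_of_lt hab).symm
      rw [if_neg hne, mul_zero, zero_add]
      have hsupp := (Module.Basis.mem_span_image (c k)).mp (hc k i b.rev)
      have hnotin : a.rev ∉ ((c k).repr
          (fr k i (c k b.rev) - (ε k).val i • c k b.rev)).support := by
        intro hcon
        have := hsupp hcon
        simp only [Set.mem_setOf_eq] at this
        rw [Fin.rev_lt_rev] at this
        exact absurd hab (asymm this)
      exact Finsupp.notMem_support_iff.mp hnotin
    · intro a b
      have hdiag : ∀ a : Fin (nn k),
          LinearMap.toMatrix (bb k) (bb k) ((f i).restrict (hNmap i k)) a a = (ε k).val i := by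
        intro a
        rw [hentry a a, if_pos rfl, mul_one]
        have hsupp := (Module.Basis.mem_span_image (c k)).mp (hc k i a.rev)
        have hnotin : a.rev ∉ ((c k).repr
            (fr k i (c k a.rev) - (ε k).val i • c k a.rev)).support := by
          intro hcon
          have := hsupp hcon
          simp only [Set.mem_setOf_eq] at this
          exact absurd this (lt_irrefl _)
        rw [Finsupp.notMem_support_iff.mp hnotin, add_zero]
      show LinearMap.toMatrix (bb k) (bb k) ((f i).restrict (hNmap i k)) a a
          = LinearMap.toMatrix (bb k) (bb k) ((f i).restrict (hNmap i k)) b b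
      rw [hdiag a, hdiag b]
  · -- the conjugation identity
    have hBmat : LinearMap.toMatrix bf bf (f i) = B := by
      rw [hbf, LinearMap.toMatrix_eq_toMatrix']
      show LinearMap.toMatrix' (Matrix.mulVecLin B) = B
      rw [← Matrix.toLin'_apply' B, LinearMap.toMatrix'_toLin']
    have hPBP : w3.toMatrix bf * B * bf.toMatrix w3 = LinearMap.toMatrix w3 w3 (f i) := by
      conv_lhs => rw [← hBmat]
      exact basis_toMatrix_mul_linearMap_toMatrix_mul_basis_toMatrix (b := w3) (b' := bf)
        (c := w3) (c' := bf) (f := f i)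
    have hsub : (LinearMap.toMatrix w3 w3 (f i)).submatrix e.symm e.symm
        = LinearMap.toMatrix cb cb (f i) := by
      ext α β
      rw [Matrix.submatrix_apply, LinearMap.toMatrix_apply, LinearMap.toMatrix_apply]
      rw [hw3]
      rw [Module.Basis.reindex_apply, Module.Basis.repr_reindex_apply]
      simp
    have hblock : LinearMap.toMatrix cb cb (f i)
        = Matrix.blockDiagonal' (fun k => LinearMap.toMatrix (bb k) (bb k)
            ((f i).restrict (hNmap i k))) :=
      LinearMap.toMatrix_directSum_collectedBasis_eq_blockDiagonal' hInternal hInternal bb bb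
        (hNmap i)
    show ((w3.toMatrix bf) * B * (bf.toMatrix w3)).submatrix e.symm e.symm = _
    rw [hPBP, hsub, hblock]
end
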